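/- arXiv:1007.2755 — 11 statements merged into one kernel-verified Lean document; each statement's English description precedes it below -/
import Mathlib

section
/- For every pair of indices α, β ∈ {0,…,n}, the dual Moser functions Poisson-commute on the unconstrained phase space: {F_α, F_β} = 0, where the bracket is the canonical Poisson bracket on ℝ^{n+1} × ℝ^{n+1}. -/
open Finset

/-- Partial derivative with respect to the momentum variable `p α`. -/
noncomputable def pderivP {m : ℕ} (F : (Fin m → ℝ) → (Fin m → ℝ) → ℝ)
    (α : Fin m) (p q : Fin m → ℝ) : ℝ :=
  deriv (fun t => F (Function.update p α t) q) (p α)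

/-- Partial derivative with respect to the position variable `q α`. -/
noncomputable def pderivQ {m : ℕ} (F : (Fin m → ℝ) → (Fin m → ℝ) → ℝ)
    (α : Fin m) (p q : Fin m → ℝ) : ℝ :=
  deriv (fun t => F p (Function.update q α t)) (q α)

/-- Canonical Poisson bracket on `ℝ^m × ℝ^m`:
`{F,G} = Σ_α (∂F/∂p_α ∂G/∂q_α − ∂F/∂q_α ∂G/∂p_α)`. -/
noncomputable def pbracket {m : ℕ} (F G : (Fin m → ℝ) → (Fin m → ℝ) → ℝ)
    (p q : Fin m → ℝ) : ℝ :=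
  ∑ α, (pderivP F α p q * pderivQ G α p q - pderivQ F α p q * pderivP G α p q)

/-- The dual Moser first integrals
`F_α(p,q) = q_α² Σ_β a_β p_β² + Σ_{β≠α} (a_α p_α q_β − a_β p_β q_α)²/(a_α − a_β)`. -/
noncomputable def dualMoser {m : ℕ} (a : Fin m → ℝ) (α : Fin m)
    (p q : Fin m → ℝ) : ℝ :=
  (q α) ^ 2 * ∑ β, a β * (p β) ^ 2 +
    ∑ β ∈ univ \ {α}, (a α * p α * q β - a β * p β * q α) ^ 2 / (a α - a β)

lemma upd_hasDerivAt {m : ℕ} (p : Fin m → ℝ) (γ β : Fin m) (x : ℝ) :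
    HasDerivAt (fun t => Function.update p γ t β) (if β = γ then 1 else 0) x := by
  rcases eq_or_ne β γ with h | h
  · subst h
    simpa [Function.update_self] using (hasDerivAt_id' x)
  · simp only [Function.update_of_ne h, if_neg h]
    exact hasDerivAt_const x _

lemma pderivP_dualMoser {m : ℕ} (a : Fin m → ℝ) (α γ : Fin m) (p q : Fin m → ℝ) :
    pderivP (dualMoser a α) γ p q =
      if γ = α then
        2 * a α * p α * q α ^ 2 +
          ∑ k ∈ univ \ {α}, 2 * (a α * p α * q k - a k * p k * q α) * (a α * q k) / (a α - a k)
      else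
        2 * a γ * p γ * q α ^ 2 -
          2 * (a α * p α * q γ - a γ * p γ * q α) * (a γ * q α) / (a α - a γ) := by
  have h : HasDerivAt (fun t => dualMoser a α (Function.update p γ t) q)
      (q α ^ 2 * ∑ b, a b * ((2 : ℕ) * Function.update p γ (p γ) b ^ (2-1) * if b = γ then 1 else 0) +
        ∑ b ∈ univ \ {α},
          ((2 : ℕ) * (a α * Function.update p γ (p γ) α * q b - a b * Function.update p γ (p γ) b * q α) ^ (2-1) *
            (a α * (if α = γ then 1 else 0) * q b - a b * (if b = γ then 1 else 0) * q α)) / (a α - a b))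
      (p γ) := by
    unfold dualMoser
    exact (HasDerivAt.fun_sum (fun b _ => ((upd_hasDerivAt p γ b (p γ)).fun_pow 2).const_mul (a b))).const_mul
        (q α ^ 2) |>.fun_add
      (HasDerivAt.fun_sum (fun b _ =>
        (((((upd_hasDerivAt p γ α (p γ)).const_mul (a α)).mul_const (q b)).fun_sub
          (((upd_hasDerivAt p γ b (p γ)).const_mul (a b)).mul_const (q α))).fun_pow 2).div_const (a α - a b)))
  rw [pderivP, h.deriv]
  simp only [Function.update_eq_self, Nat.reduceSub, pow_one, Nat.cast_ofNat]
  have h1 : ∑ b, a b * (2 * p b * if b = γ then 1 else 0) = 2 * a γ * p γ := by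
    simp [mul_ite, mul_one, mul_zero, Finset.sum_ite_eq']
    ring
  rw [h1]
  rcases eq_or_ne γ α with rfl | hγ
  · simp only [eq_self_iff_true, if_true]
    have h2 : ∀ b ∈ univ \ {γ},
        2 * (a γ * p γ * q b - a b * p b * q γ) *
          (a γ * 1 * q b - a b * (if b = γ then 1 else 0) * q γ) / (a γ - a b)
        = 2 * (a γ * p γ * q b - a b * p b * q γ) * (a γ * q b) / (a γ - a b) := by
      intro b hb
      have hbγ : b ≠ γ := by simpa using hb
      rw [if_neg hbγ]; ring_nf
    rw [Finset.sum_congr rfl h2]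
    ring
  · rw [if_neg hγ]
    have hγmem : γ ∈ univ \ {α} := by simp [hγ]
    rw [Finset.sum_eq_single_of_mem γ hγmem (fun b _ hbγ => by
      rw [if_neg (Ne.symm hγ), if_neg hbγ]; ring)]
    rw [if_neg (Ne.symm hγ), if_pos rfl]
    ring

lemma pderivQ_dualMoser {m : ℕ} (a : Fin m → ℝ) (α γ : Fin m) (p q : Fin m → ℝ) :
    pderivQ (dualMoser a α) γ p q =
      if γ = α then
        2 * q α * (∑ k, a k * p k ^ 2) -
          ∑ k ∈ univ \ {α}, 2 * (a α * p α * q k - a k * p k * q α) * (a k * p k) / (a α - a k)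
      else
        2 * (a α * p α * q γ - a γ * p γ * q α) * (a α * p α) / (a α - a γ) := by
  have h : HasDerivAt (fun t => dualMoser a α p (Function.update q γ t))
      (((2 : ℕ) * Function.update q γ (q γ) α ^ (2-1) * if α = γ then 1 else 0) * ∑ b, a b * p b ^ 2 +
        ∑ b ∈ univ \ {α},
          ((2 : ℕ) * (a α * p α * Function.update q γ (q γ) b - a b * p b * Function.update q γ (q γ) α) ^ (2-1) *
            (a α * p α * (if b = γ then 1 else 0) - a b * p b * (if α = γ then 1 else 0))) / (a α - a b))
      (q γ) := by
    unfold dualMoser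
    exact ((upd_hasDerivAt q γ α (q γ)).fun_pow 2).mul_const (∑ b, a b * p b ^ 2) |>.fun_add
      (HasDerivAt.fun_sum (fun b _ =>
        ((((upd_hasDerivAt q γ b (q γ)).const_mul (a α * p α)).fun_sub
          ((upd_hasDerivAt q γ α (q γ)).const_mul (a b * p b))).fun_pow 2).div_const (a α - a b)))
  rw [pderivQ, h.deriv]
  simp only [Function.update_eq_self, Nat.reduceSub, pow_one, Nat.cast_ofNat]
  rcases eq_or_ne γ α with rfl | hγ
  · simp only [eq_self_iff_true, if_true]
    have h2 : ∀ b ∈ univ \ {γ},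
        2 * (a γ * p γ * q b - a b * p b * q γ) *
          (a γ * p γ * (if b = γ then 1 else 0) - a b * p b * 1) / (a γ - a b)
        = -(2 * (a γ * p γ * q b - a b * p b * q γ) * (a b * p b) / (a γ - a b)) := by
      intro b hb
      have hbγ : b ≠ γ := by simpa using hb
      rw [if_neg hbγ]; ring
    rw [Finset.sum_congr rfl h2, Finset.sum_neg_distrib]
    ring
  · rw [if_neg hγ]
    have hγmem : γ ∈ univ \ {α} := by simp [hγ]
    rw [Finset.sum_eq_single_of_mem γ hγmem (fun b _ hbγ => by
      rw [if_neg (Ne.symm hγ), if_neg hbγ]; ring)]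
    rw [if_neg (Ne.symm hγ), if_pos rfl]
    ring

/-- the dual Moser functions Poisson-commute on the unconstrained
phase space `ℝ^{n+1} × ℝ^{n+1}`. -/
theorem dualMoser_poisson_commute (n : ℕ) (hn : 1 ≤ n)
    (a : Fin (n + 1) → ℝ) (ha0 : 0 < a 0) (hmono : StrictMono a)
    (α β : Fin (n + 1)) (p q : Fin (n + 1) → ℝ) :
    pbracket (dualMoser a α) (dualMoser a β) p q = 0 := by
  rcases eq_or_ne α β with rfl | hab
  · rw [pbracket]
    exact Finset.sum_eq_zero fun γ _ => by ring
  have hAB : a α ≠ a β := fun h => hab (hmono.injective h)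
  have hdAB : a α - a β ≠ 0 := sub_ne_zero.mpr hAB
  have hdBA : a β - a α ≠ 0 := sub_ne_zero.mpr (Ne.symm hAB)
  obtain ⟨s, hs⟩ : ∃ s : Finset (Fin (n + 1)), s = univ \ {α, β} := ⟨_, rfl⟩
  have hks : ∀ k, k ∈ s ↔ ¬k = α ∧ ¬k = β := by
    intro k; rw [hs]; simp [not_or]
  have hβs : β ∉ s := fun h => ((hks β).1 h).2 rfl
  have hαs' : α ∉ s := fun h => ((hks α).1 h).1 rfl
  have hαs : α ∉ insert β s := by
    simp only [Finset.mem_insert, not_or]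
    exact ⟨hab, hαs'⟩
  have huniv : (univ : Finset (Fin (n + 1))) = insert α (insert β s) := by
    ext k
    simp only [Finset.mem_univ, Finset.mem_insert, hks, true_iff]
    by_cases h1 : k = α
    · tauto
    · by_cases h2 : k = β <;> tauto
  have e1 : univ \ ({α} : Finset (Fin (n + 1))) = insert β s := by
    ext k
    simp only [Finset.mem_sdiff, Finset.mem_univ, Finset.mem_singleton, true_and,
      Finset.mem_insert, hks]
    constructor
    · intro h
      by_cases h2 : k = β
      · exact Or.inl h2
      · exact Or.inr ⟨h, h2⟩
    · rintro (rfl | ⟨h, _⟩)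
      · exact Ne.symm hab
      · exact h
  have e2 : univ \ ({β} : Finset (Fin (n + 1))) = insert α s := by
    ext k
    simp only [Finset.mem_sdiff, Finset.mem_univ, Finset.mem_singleton, true_and,
      Finset.mem_insert, hks]
    constructor
    · intro h
      by_cases h1 : k = α
      · exact Or.inl h1
      · exact Or.inr ⟨h1, h⟩
    · rintro (rfl | ⟨_, h⟩)
      · exact hab
      · exact h
  have hsplit : ∀ F : Fin (n + 1) → ℝ, ∑ γ, F γ = F α + F β + ∑ γ ∈ s, F γ := by
    intro F
    rw [huniv, Finset.sum_insert hαs, Finset.sum_insert hβs]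
    ring
  have hterm : ∀ γ ∈ s,
      pderivP (dualMoser a α) γ p q * pderivQ (dualMoser a β) γ p q -
        pderivQ (dualMoser a α) γ p q * pderivP (dualMoser a β) γ p q =
      (2 * a γ * p γ * q α ^ 2 -
          2 * (a α * p α * q γ - a γ * p γ * q α) * (a γ * q α) / (a α - a γ)) *
        (2 * (a β * p β * q γ - a γ * p γ * q β) * (a β * p β) / (a β - a γ)) -
      (2 * (a α * p α * q γ - a γ * p γ * q α) * (a α * p α) / (a α - a γ)) *
        (2 * a γ * p γ * q β ^ 2 -
          2 * (a β * p β * q γ - a γ * p γ * q β) * (a γ * q β) / (a β - a γ)) := by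
    intro γ hγ
    have hγ' : γ ≠ α ∧ γ ≠ β := (hks γ).1 hγ
    rw [pderivP_dualMoser, pderivQ_dualMoser, pderivQ_dualMoser, pderivP_dualMoser]
    simp only [if_neg hγ'.1, if_neg hγ'.2]
  rw [pbracket, hsplit]
  rw [Finset.sum_congr rfl hterm]
  simp only [pderivP_dualMoser, pderivQ_dualMoser, if_neg hab, if_neg (Ne.symm hab),
    eq_self_iff_true, if_true]
  simp only [hsplit]
  rw [e1, e2]
  simp only [Finset.sum_insert hβs, Finset.sum_insert hαs']
  have hU : (∑ γ ∈ s,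
      ((2 * a γ * p γ * q α ^ 2 -
          2 * (a α * p α * q γ - a γ * p γ * q α) * (a γ * q α) / (a α - a γ)) *
        (2 * (a β * p β * q γ - a γ * p γ * q β) * (a β * p β) / (a β - a γ)) -
      (2 * (a α * p α * q γ - a γ * p γ * q α) * (a α * p α) / (a α - a γ)) *
        (2 * a γ * p γ * q β ^ 2 -
          2 * (a β * p β * q γ - a γ * p γ * q β) * (a γ * q β) / (a β - a γ)))) =
      (-(2 * (a β * p β * q α - a α * p α * q β) * (a β * p β) / (a β - a α))) *
        (∑ k ∈ s, 2 * (a α * p α * q k - a k * p k * q α) * (a α * q k) / (a α - a k)) +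
      (-(2 * a α * p α * q β ^ 2 -
          2 * (a β * p β * q α - a α * p α * q β) * (a α * q β) / (a β - a α))) *
        (∑ k ∈ s, 2 * (a α * p α * q k - a k * p k * q α) * (a k * p k) / (a α - a k)) +
      (2 * q α * (2 * a α * p α * q β ^ 2 -
            2 * (a β * p β * q α - a α * p α * q β) * (a α * q β) / (a β - a α)) -
        2 * q β * (2 * a β * p β * q α ^ 2 -
            2 * (a α * p α * q β - a β * p β * q α) * (a β * q α) / (a α - a β))) *
        (∑ k ∈ s, a k * p k ^ 2) +
      (2 * (a α * p α * q β - a β * p β * q α) * (a α * p α) / (a α - a β)) *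
        (∑ k ∈ s, 2 * (a β * p β * q k - a k * p k * q β) * (a β * q k) / (a β - a k)) +
      (2 * a β * p β * q α ^ 2 -
          2 * (a α * p α * q β - a β * p β * q α) * (a β * q α) / (a α - a β)) *
        (∑ k ∈ s, 2 * (a β * p β * q k - a k * p k * q β) * (a k * p k) / (a β - a k)) := by
    rw [Finset.mul_sum, Finset.mul_sum, Finset.mul_sum, Finset.mul_sum, Finset.mul_sum,
      ← Finset.sum_add_distrib, ← Finset.sum_add_distrib, ← Finset.sum_add_distrib,
      ← Finset.sum_add_distrib]
    refine Finset.sum_congr rfl fun γ hγ => ?_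
    have hγ' : γ ≠ α ∧ γ ≠ β := (hks γ).1 hγ
    have hdAG : a α - a γ ≠ 0 := sub_ne_zero.mpr fun h => hγ'.1 (hmono.injective h).symm
    have hdBG : a β - a γ ≠ 0 := sub_ne_zero.mpr fun h => hγ'.2 (hmono.injective h).symm
    field_simp
    ring
  rw [hU]
  field_simp
  ring
end

section
/- For every α ∈ {0,…,n}, the canonical Poisson bracket of the Hamiltonian H with the dual Moser function F_α equals {H, F_α} = 2 (B(q) a_α p_α² − q_α² Σ_{β=0}^n p_β²) Σ_{γ=0}^n p_γ q_γ, identically on ℝ^{n+1} × ℝ^{n+1}. -/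
open Finset

/-- The Hamiltonian `H(p,q) = ½ B(q) Σ_α p_α²` with `B(q) = Σ_α q_α²/a_α`. -/
noncomputable def dualMoserHam {m : ℕ} (a : Fin m → ℝ) (p q : Fin m → ℝ) : ℝ :=
  (1 / 2) * (∑ α, (q α) ^ 2 / a α) * ∑ α, (p α) ^ 2

section Helpers

variable {m : ℕ} (a : Fin m → ℝ) (p q : Fin m → ℝ)

lemma hda_congr {f : ℝ → ℝ} {d d' x : ℝ} (h : HasDerivAt f d x) (hd : d' = d) :
    HasDerivAt f d' x := hd ▸ h

lemma pderivP_ham (γ : Fin m) :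
    pderivP (dualMoserHam a) γ p q = (∑ β, (q β) ^ 2 / a β) * p γ := by
  have hfun : (fun t => dualMoserHam a (Function.update p γ t) q)
      = fun t => (1 / 2) * (∑ β, (q β) ^ 2 / a β) *
          (t ^ 2 + ∑ β ∈ univ \ {γ}, (p β) ^ 2) := by
    funext t
    unfold dualMoserHam
    congr 1
    rw [Finset.sum_eq_add_sum_sdiff_singleton_of_mem (Finset.mem_univ γ)
      (fun β => (Function.update p γ t β) ^ 2)]
    simp only [Function.update_self]
    congr 1
    exact Finset.sum_congr rfl fun β hβ => by
      rw [Function.update_of_ne (by simpa using (Finset.mem_sdiff.mp hβ).2)]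
  have H : HasDerivAt
      (fun t => (1 / 2) * (∑ β, (q β) ^ 2 / a β) *
        (t ^ 2 + ∑ β ∈ univ \ {γ}, (p β) ^ 2))
      ((∑ β, (q β) ^ 2 / a β) * p γ) (p γ) :=
    hda_congr (((hasDerivAt_pow 2 (p γ)).add_const
      (∑ β ∈ univ \ {γ}, (p β) ^ 2)).const_mul ((1 / 2) * (∑ β, (q β) ^ 2 / a β)))
      (by push_cast [id_eq]; ring)
  rw [pderivP, hfun, H.deriv]

lemma pderivQ_ham (γ : Fin m) :
    pderivQ (dualMoserHam a) γ p q = q γ / a γ * ∑ β, (p β) ^ 2 := by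
  have hfun : (fun t => dualMoserHam a p (Function.update q γ t))
      = fun t => (1 / 2) * (t ^ 2 / a γ + ∑ β ∈ univ \ {γ}, (q β) ^ 2 / a β) *
          ∑ β, (p β) ^ 2 := by
    funext t
    unfold dualMoserHam
    congr 2
    rw [Finset.sum_eq_add_sum_sdiff_singleton_of_mem (Finset.mem_univ γ)
      (fun β => (Function.update q γ t β) ^ 2 / a β)]
    simp only [Function.update_self]
    congr 1
    exact Finset.sum_congr rfl fun β hβ => by
      rw [Function.update_of_ne (by simpa using (Finset.mem_sdiff.mp hβ).2)]
  have H : HasDerivAt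
      (fun t => (1 / 2) * (t ^ 2 / a γ + ∑ β ∈ univ \ {γ}, (q β) ^ 2 / a β) *
        ∑ β, (p β) ^ 2)
      (q γ / a γ * ∑ β, (p β) ^ 2) (q γ) :=
    hda_congr (((((hasDerivAt_pow 2 (q γ)).div_const (a γ)).add_const
      (∑ β ∈ univ \ {γ}, (q β) ^ 2 / a β)).const_mul (1 / 2)).mul_const
      (∑ β, (p β) ^ 2))
      (by push_cast [id_eq]; ring)
  rw [pderivQ, hfun, H.deriv]

variable (α : Fin m)

lemma pderivP_moser_self :
    pderivP (dualMoser a α) α p q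
      = a α * (2 * p α * (q α) ^ 2 +
          ∑ β ∈ univ \ {α}, 2 * q β * (a α * p α * q β - a β * p β * q α) / (a α - a β)) := by
  have hfun : (fun t => dualMoser a α (Function.update p α t) q)
      = fun t => (q α) ^ 2 * (a α * t ^ 2 + ∑ β ∈ univ \ {α}, a β * (p β) ^ 2)
          + ∑ β ∈ univ \ {α}, (a α * t * q β - a β * p β * q α) ^ 2 / (a α - a β) := by
    funext t
    unfold dualMoser
    simp only [Function.update_self]
    congr 1
    · rw [Finset.sum_eq_add_sum_sdiff_singleton_of_mem (Finset.mem_univ α)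
        (fun β => a β * (Function.update p α t β) ^ 2)]
      simp only [Function.update_self]
      congr 2
      exact Finset.sum_congr rfl fun β hβ => by
        rw [Function.update_of_ne (by simpa using (Finset.mem_sdiff.mp hβ).2)]
    · exact Finset.sum_congr rfl fun β hβ => by
        rw [Function.update_of_ne (by simpa using (Finset.mem_sdiff.mp hβ).2)]
  have H : HasDerivAt
      (fun t => (q α) ^ 2 * (a α * t ^ 2 + ∑ β ∈ univ \ {α}, a β * (p β) ^ 2)
          + ∑ β ∈ univ \ {α}, (a α * t * q β - a β * p β * q α) ^ 2 / (a α - a β))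
      (a α * (2 * p α * (q α) ^ 2 +
          ∑ β ∈ univ \ {α}, 2 * q β * (a α * p α * q β - a β * p β * q α) / (a α - a β)))
      (p α) := by
    have h1 : HasDerivAt (fun t : ℝ => (q α) ^ 2 *
        (a α * t ^ 2 + ∑ β ∈ univ \ {α}, a β * (p β) ^ 2))
        ((q α) ^ 2 * (a α * (2 * p α))) (p α) :=
      hda_congr ((((hasDerivAt_pow 2 (p α)).const_mul (a α)).add_const
        (∑ β ∈ univ \ {α}, a β * (p β) ^ 2)).const_mul ((q α) ^ 2))
        (by push_cast [id_eq]; ring)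
    have h2 : HasDerivAt
        (fun t => ∑ β ∈ univ \ {α}, (a α * t * q β - a β * p β * q α) ^ 2 / (a α - a β))
        (∑ β ∈ univ \ {α},
          a α * (2 * q β * (a α * p α * q β - a β * p β * q α) / (a α - a β))) (p α) :=
      HasDerivAt.fun_sum fun β _ =>
        hda_congr (((((hasDerivAt_id (p α)).const_mul (a α)).mul_const (q β)).sub_const
          (a β * p β * q α) |>.pow 2).div_const (a α - a β))
          (by push_cast [id_eq]; ring)
    exact hda_congr (h1.add h2) (by rw [← Finset.mul_sum]; ring)
  rw [pderivP, hfun, H.deriv]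

lemma pderivP_moser_ne (γ : Fin m) (hγ : γ ≠ α) :
    pderivP (dualMoser a α) γ p q
      = a γ * (2 * p γ * (q α) ^ 2 -
          2 * q α * (a α * p α * q γ - a γ * p γ * q α) / (a α - a γ)) := by
  have hγA : γ ∈ univ \ {α} := by simp [hγ]
  have hfun : (fun t => dualMoser a α (Function.update p γ t) q)
      = fun t => ((q α) ^ 2 * (a γ * t ^ 2 + ∑ β ∈ univ \ {γ}, a β * (p β) ^ 2)
          + (a α * p α * q γ - a γ * t * q α) ^ 2 / (a α - a γ))
          + ∑ β ∈ (univ \ {α}) \ {γ}, (a α * p α * q β - a β * p β * q α) ^ 2 / (a α - a β) := by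
    funext t
    unfold dualMoser
    rw [Finset.sum_eq_add_sum_sdiff_singleton_of_mem hγA
      (fun β => (a α * Function.update p γ t α * q β - a β * Function.update p γ t β * q α) ^ 2 / (a α - a β))]
    simp only [Function.update_self, Function.update_of_ne (Ne.symm hγ)]
    rw [← add_assoc]
    congr 1
    · congr 1
      rw [Finset.sum_eq_add_sum_sdiff_singleton_of_mem (Finset.mem_univ γ)
        (fun β => a β * (Function.update p γ t β) ^ 2)]
      simp only [Function.update_self]
      congr 2
      exact Finset.sum_congr rfl fun β hβ => by
        rw [Function.update_of_ne (by simpa using (Finset.mem_sdiff.mp hβ).2)]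
    · exact Finset.sum_congr rfl fun β hβ => by
        rw [Function.update_of_ne (by simpa using (Finset.mem_sdiff.mp hβ).2)]
  have H : HasDerivAt
      (fun t => ((q α) ^ 2 * (a γ * t ^ 2 + ∑ β ∈ univ \ {γ}, a β * (p β) ^ 2)
          + (a α * p α * q γ - a γ * t * q α) ^ 2 / (a α - a γ))
          + ∑ β ∈ (univ \ {α}) \ {γ}, (a α * p α * q β - a β * p β * q α) ^ 2 / (a α - a β))
      (a γ * (2 * p γ * (q α) ^ 2 -
          2 * q α * (a α * p α * q γ - a γ * p γ * q α) / (a α - a γ))) (p γ) := by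
    have h1 : HasDerivAt (fun t : ℝ => (q α) ^ 2 *
        (a γ * t ^ 2 + ∑ β ∈ univ \ {γ}, a β * (p β) ^ 2))
        ((q α) ^ 2 * (a γ * (2 * p γ))) (p γ) :=
      hda_congr ((((hasDerivAt_pow 2 (p γ)).const_mul (a γ)).add_const
        (∑ β ∈ univ \ {γ}, a β * (p β) ^ 2)).const_mul ((q α) ^ 2))
        (by push_cast [id_eq]; ring)
    have h2 : HasDerivAt
        (fun t => (a α * p α * q γ - a γ * t * q α) ^ 2 / (a α - a γ))
        (-(2 * q α * a γ * (a α * p α * q γ - a γ * p γ * q α)) / (a α - a γ)) (p γ) :=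
      hda_congr (((((hasDerivAt_id (p γ)).const_mul (a γ)).mul_const (q α)).const_sub
        (a α * p α * q γ) |>.pow 2).div_const (a α - a γ))
        (by push_cast [id_eq]; ring)
    exact hda_congr ((h1.add h2).add_const _) (by push_cast [id_eq]; ring)
  rw [pderivP, hfun, H.deriv]

lemma pderivQ_moser_self :
    pderivQ (dualMoser a α) α p q
      = 2 * q α * (∑ β, a β * (p β) ^ 2) -
          ∑ β ∈ univ \ {α}, 2 * a β * p β * (a α * p α * q β - a β * p β * q α) / (a α - a β) := by
  have hfun : (fun t => dualMoser a α p (Function.update q α t))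
      = fun t => t ^ 2 * (∑ β, a β * (p β) ^ 2)
          + ∑ β ∈ univ \ {α}, (a α * p α * q β - a β * p β * t) ^ 2 / (a α - a β) := by
    funext t
    unfold dualMoser
    simp only [Function.update_self]
    congr 1
    exact Finset.sum_congr rfl fun β hβ => by
      rw [Function.update_of_ne (by simpa using (Finset.mem_sdiff.mp hβ).2)]
  have H : HasDerivAt
      (fun t => t ^ 2 * (∑ β, a β * (p β) ^ 2)
          + ∑ β ∈ univ \ {α}, (a α * p α * q β - a β * p β * t) ^ 2 / (a α - a β))
      (2 * q α * (∑ β, a β * (p β) ^ 2) -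
          ∑ β ∈ univ \ {α}, 2 * a β * p β * (a α * p α * q β - a β * p β * q α) / (a α - a β))
      (q α) := by
    have h1 : HasDerivAt (fun t : ℝ => t ^ 2 * (∑ β, a β * (p β) ^ 2))
        (2 * q α * (∑ β, a β * (p β) ^ 2)) (q α) :=
      hda_congr ((hasDerivAt_pow 2 (q α)).mul_const (∑ β, a β * (p β) ^ 2))
        (by push_cast [id_eq]; ring)
    have h2 : HasDerivAt
        (fun t => ∑ β ∈ univ \ {α}, (a α * p α * q β - a β * p β * t) ^ 2 / (a α - a β))
        (∑ β ∈ univ \ {α},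
          -(2 * a β * p β * (a α * p α * q β - a β * p β * q α) / (a α - a β))) (q α) :=
      HasDerivAt.fun_sum fun β _ =>
        hda_congr (((((hasDerivAt_id (q α)).const_mul (a β * p β)).const_sub
          (a α * p α * q β)) |>.pow 2).div_const (a α - a β))
          (by push_cast [id_eq]; ring)
    exact hda_congr (h1.add h2) (by rw [Finset.sum_neg_distrib]; ring)
  rw [pderivQ, hfun, H.deriv]

lemma pderivQ_moser_ne (γ : Fin m) (hγ : γ ≠ α) :
    pderivQ (dualMoser a α) γ p q
      = 2 * a α * p α * (a α * p α * q γ - a γ * p γ * q α) / (a α - a γ) := by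
  have hγA : γ ∈ univ \ {α} := by simp [hγ]
  have hfun : (fun t => dualMoser a α p (Function.update q γ t))
      = fun t => (q α) ^ 2 * (∑ β, a β * (p β) ^ 2)
          + ((a α * p α * t - a γ * p γ * q α) ^ 2 / (a α - a γ)
          + ∑ β ∈ (univ \ {α}) \ {γ}, (a α * p α * q β - a β * p β * q α) ^ 2 / (a α - a β)) := by
    funext t
    unfold dualMoser
    rw [Finset.sum_eq_add_sum_sdiff_singleton_of_mem hγA
      (fun β => (a α * p α * Function.update q γ t β - a β * p β * Function.update q γ t α) ^ 2 / (a α - a β))]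
    simp only [Function.update_self, Function.update_of_ne (Ne.symm hγ)]
    congr 1
    congr 1
    exact Finset.sum_congr rfl fun β hβ => by
      rw [Function.update_of_ne (by simpa using (Finset.mem_sdiff.mp hβ).2)]
  have H : HasDerivAt
      (fun t => (q α) ^ 2 * (∑ β, a β * (p β) ^ 2)
          + ((a α * p α * t - a γ * p γ * q α) ^ 2 / (a α - a γ)
          + ∑ β ∈ (univ \ {α}) \ {γ}, (a α * p α * q β - a β * p β * q α) ^ 2 / (a α - a β)))
      (2 * a α * p α * (a α * p α * q γ - a γ * p γ * q α) / (a α - a γ)) (q γ) := by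
    have h2 : HasDerivAt
        (fun t => (a α * p α * t - a γ * p γ * q α) ^ 2 / (a α - a γ))
        (2 * a α * p α * (a α * p α * q γ - a γ * p γ * q α) / (a α - a γ)) (q γ) :=
      hda_congr ((((hasDerivAt_id (q γ)).const_mul (a α * p α)).sub_const
        (a γ * p γ * q α) |>.pow 2).div_const (a α - a γ))
        (by push_cast [id_eq]; ring)
    exact hda_congr ((h2.add_const _).const_add _) (by ring)
  rw [pderivQ, hfun, H.deriv]

end Helpers

/-- `{H, F_α} = 2 (B(q) a_α p_α² − q_α² Σ_β p_β²) Σ_γ p_γ q_γ`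
identically on `ℝ^{n+1} × ℝ^{n+1}`. -/
theorem poisson_ham_dualMoser (n : ℕ) (hn : 1 ≤ n)
    (a : Fin (n + 1) → ℝ) (ha0 : 0 < a 0) (hmono : StrictMono a)
    (α : Fin (n + 1)) (p q : Fin (n + 1) → ℝ) :
    pbracket (dualMoserHam a) (dualMoser a α) p q =
      2 * ((∑ β, (q β) ^ 2 / a β) * a α * (p α) ^ 2 - (q α) ^ 2 * ∑ β, (p β) ^ 2) *
        ∑ γ, p γ * q γ := by
  have hane : ∀ β, a β ≠ 0 := fun β =>
    (lt_of_lt_of_le ha0 (hmono.monotone (Fin.zero_le β))).ne'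
  have hd : ∀ β : Fin (n + 1), β ≠ α → a α - a β ≠ 0 := fun β h =>
    sub_ne_zero.mpr (hmono.injective.ne (Ne.symm h))
  unfold pbracket
  rw [Finset.sum_eq_add_sum_sdiff_singleton_of_mem (Finset.mem_univ α)
    (fun γ => pderivP (dualMoserHam a) γ p q * pderivQ (dualMoser a α) γ p q -
      pderivQ (dualMoserHam a) γ p q * pderivP (dualMoser a α) γ p q)]
  rw [pderivP_ham, pderivQ_ham, pderivP_moser_self, pderivQ_moser_self]
  have hA : ∑ γ ∈ univ \ {α},
      (pderivP (dualMoserHam a) γ p q * pderivQ (dualMoser a α) γ p q -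
        pderivQ (dualMoserHam a) γ p q * pderivP (dualMoser a α) γ p q)
      = ∑ γ ∈ univ \ {α},
        (2 * (∑ β, (q β) ^ 2 / a β) * a α * p α * p γ *
            (a α * p α * q γ - a γ * p γ * q α) / (a α - a γ)
          + 2 * (∑ β, (p β) ^ 2) * q α * q γ *
            (a α * p α * q γ - a γ * p γ * q α) / (a α - a γ)
          - 2 * (∑ β, (p β) ^ 2) * (q α) ^ 2 * (p γ * q γ)) :=
    Finset.sum_congr rfl fun γ hγ => by
      have hγα : γ ≠ α := by simpa using (Finset.mem_sdiff.mp hγ).2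
      rw [pderivP_ham, pderivQ_ham, pderivP_moser_ne a p q α γ hγα,
        pderivQ_moser_ne a p q α γ hγα]
      have h1 := hd γ hγα
      have h2 := hane γ
      field_simp
      ring
  rw [hA]
  have hpqA : ∑ γ ∈ univ \ {α}, p γ * q γ = (∑ γ, p γ * q γ) - p α * q α := by
    rw [Finset.sum_eq_add_sum_sdiff_singleton_of_mem (Finset.mem_univ α) (fun γ => p γ * q γ)]
    ring
  have hMA : ∑ γ ∈ univ \ {α}, a γ * (p γ) ^ 2 = (∑ γ, a γ * (p γ) ^ 2) - a α * (p α) ^ 2 := by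
    rw [Finset.sum_eq_add_sum_sdiff_singleton_of_mem (Finset.mem_univ α) (fun γ => a γ * (p γ) ^ 2)]
    ring
  have hcancel : q α / a α * (∑ β, (p β) ^ 2) *
      (a α * (2 * p α * (q α) ^ 2 +
        ∑ β ∈ univ \ {α}, 2 * q β * (a α * p α * q β - a β * p β * q α) / (a α - a β)))
      = q α * (∑ β, (p β) ^ 2) * (2 * p α * (q α) ^ 2 +
        ∑ β ∈ univ \ {α}, 2 * q β * (a α * p α * q β - a β * p β * q α) / (a α - a β)) := by
    have h1 := hane α
    field_simp
  have hkey : (∑ γ ∈ univ \ {α},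
        (2 * (∑ β, (q β) ^ 2 / a β) * a α * p α * p γ *
            (a α * p α * q γ - a γ * p γ * q α) / (a α - a γ)
          + 2 * (∑ β, (p β) ^ 2) * q α * q γ *
            (a α * p α * q γ - a γ * p γ * q α) / (a α - a γ)
          - 2 * (∑ β, (p β) ^ 2) * (q α) ^ 2 * (p γ * q γ)))
      - (∑ β, (q β) ^ 2 / a β) * p α *
        (∑ β ∈ univ \ {α}, 2 * a β * p β * (a α * p α * q β - a β * p β * q α) / (a α - a β))
      - q α * (∑ β, (p β) ^ 2) *
        (∑ β ∈ univ \ {α}, 2 * q β * (a α * p α * q β - a β * p β * q α) / (a α - a β))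
      = 2 * (∑ β, (q β) ^ 2 / a β) * p α *
          (a α * p α * ((∑ γ, p γ * q γ) - p α * q α)
            - q α * ((∑ γ, a γ * (p γ) ^ 2) - a α * (p α) ^ 2))
        - 2 * (∑ β, (p β) ^ 2) * (q α) ^ 2 * ((∑ γ, p γ * q γ) - p α * q α) := by
    rw [Finset.mul_sum (univ \ {α}) _ ((∑ β, (q β) ^ 2 / a β) * p α),
      Finset.mul_sum (univ \ {α}) _ (q α * (∑ β, (p β) ^ 2)),
      ← Finset.sum_sub_distrib, ← Finset.sum_sub_distrib]
    have : ∀ γ ∈ univ \ {α},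
        (2 * (∑ β, (q β) ^ 2 / a β) * a α * p α * p γ *
            (a α * p α * q γ - a γ * p γ * q α) / (a α - a γ)
          + 2 * (∑ β, (p β) ^ 2) * q α * q γ *
            (a α * p α * q γ - a γ * p γ * q α) / (a α - a γ)
          - 2 * (∑ β, (p β) ^ 2) * (q α) ^ 2 * (p γ * q γ))
        - (∑ β, (q β) ^ 2 / a β) * p α *
            (2 * a γ * p γ * (a α * p α * q γ - a γ * p γ * q α) / (a α - a γ))
        - q α * (∑ β, (p β) ^ 2) *
            (2 * q γ * (a α * p α * q γ - a γ * p γ * q α) / (a α - a γ))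
        = 2 * (∑ β, (q β) ^ 2 / a β) * p α *
            (a α * p α * (p γ * q γ) - q α * (a γ * (p γ) ^ 2))
          - 2 * (∑ β, (p β) ^ 2) * (q α) ^ 2 * (p γ * q γ) := fun γ hγ => by
      have hγα : γ ≠ α := by simpa using (Finset.mem_sdiff.mp hγ).2
      have h1 := hd γ hγα
      field_simp
      ring
    rw [Finset.sum_congr rfl this]
    simp only [Finset.sum_sub_distrib, ← Finset.mul_sum]
    rw [hpqA, hMA]
  linear_combination (-1 : ℝ) * hcancel + hkey
end

section
/- With J(p) = Σ_{β=0}^n a_β p_β², A_α(p,q) = q_α² J(p), M_{αβ}(p,q) = a_α p_α q_β − a_β p_β q_α, and B_α(p,q) = Σ_{β≠α} M_{αβ}²/(a_α − a_β), the following Poisson bracket identities hold identically on ℝ^{n+1} × ℝ^{n+1}: (i) {A_α, A_β} = −4 J q_α q_β M_{αβ} for all α, β; (ii) {A_α, B_β} = 4 J a_α q_α q_β M_{αβ}/(a_α − a_β) for all α ≠ β; (iii) {B_α, B_β} = 0 for all α, β. -/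
open Finset

/-- `J(p) = Σ_β a_β p_β²`. -/
noncomputable def Jfun {m : ℕ} (a : Fin m → ℝ) (p : Fin m → ℝ) : ℝ :=
  ∑ β, a β * (p β) ^ 2

/-- `A_α(p,q) = q_α² J(p)`. -/
noncomputable def Afun {m : ℕ} (a : Fin m → ℝ) (α : Fin m) (p q : Fin m → ℝ) : ℝ :=
  (q α) ^ 2 * Jfun a p

/-- `M_{αβ}(p,q) = a_α p_α q_β − a_β p_β q_α`. -/
noncomputable def Mfun {m : ℕ} (a : Fin m → ℝ) (α β : Fin m) (p q : Fin m → ℝ) : ℝ :=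
  a α * p α * q β - a β * p β * q α

/-- `B_α(p,q) = Σ_{β≠α} M_{αβ}²/(a_α − a_β)`. -/
noncomputable def Bfun {m : ℕ} (a : Fin m → ℝ) (α : Fin m) (p q : Fin m → ℝ) : ℝ :=
  ∑ β ∈ univ \ {α}, (Mfun a α β p q) ^ 2 / (a α - a β)

lemma update_J {m : ℕ} (a : Fin m → ℝ) (γ : Fin m) (p : Fin m → ℝ) (t : ℝ) :
    Jfun a (Function.update p γ t) = a γ * t ^ 2 + ∑ β ∈ univ.erase γ, a β * p β ^ 2 := by
  unfold Jfun
  rw [← Finset.add_sum_erase _ _ (Finset.mem_univ γ), Function.update_self]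
  congr 1
  exact Finset.sum_congr rfl fun β hβ => by
    rw [Function.update_of_ne (Finset.ne_of_mem_erase hβ)]

lemma hasDerivAt_M_P {m : ℕ} (a : Fin m → ℝ) (α β γ : Fin m) (p q : Fin m → ℝ) :
    HasDerivAt (fun t => Mfun a α β (Function.update p γ t) q)
      ((if α = γ then a α * q β else 0) - (if β = γ then a β * q α else 0)) (p γ) := by
  have h : (fun t => Mfun a α β (Function.update p γ t) q)
      = fun t => ((if α = γ then a α * q β else 0) - (if β = γ then a β * q α else 0)) * t
        + ((if α = γ then 0 else a α * p α * q β) - (if β = γ then 0 else a β * p β * q α)) := by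
    funext t
    simp only [Mfun, Function.update_apply]
    split_ifs <;> ring
  rw [h]
  simpa using ((hasDerivAt_id (p γ)).const_mul
    ((if α = γ then a α * q β else 0) - (if β = γ then a β * q α else 0))).add_const
      ((if α = γ then 0 else a α * p α * q β) - (if β = γ then 0 else a β * p β * q α))

lemma hasDerivAt_M_Q {m : ℕ} (a : Fin m → ℝ) (α β γ : Fin m) (p q : Fin m → ℝ) :
    HasDerivAt (fun t => Mfun a α β p (Function.update q γ t))
      ((if β = γ then a α * p α else 0) - (if α = γ then a β * p β else 0)) (q γ) := by
  have h : (fun t => Mfun a α β p (Function.update q γ t))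
      = fun t => ((if β = γ then a α * p α else 0) - (if α = γ then a β * p β else 0)) * t
        + ((if β = γ then 0 else a α * p α * q β) - (if α = γ then 0 else a β * p β * q α)) := by
    funext t
    simp only [Mfun, Function.update_apply]
    split_ifs <;> ring
  rw [h]
  simpa using ((hasDerivAt_id (q γ)).const_mul
    ((if β = γ then a α * p α else 0) - (if α = γ then a β * p β else 0))).add_const
      ((if β = γ then 0 else a α * p α * q β) - (if α = γ then 0 else a β * p β * q α))

lemma pderivP_A {m : ℕ} (a : Fin m → ℝ) (α γ : Fin m) (p q : Fin m → ℝ) :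
    pderivP (Afun a α) γ p q = 2 * q α ^ 2 * a γ * p γ := by
  unfold pderivP Afun
  simp only [update_J]
  have h : HasDerivAt (fun t : ℝ => q α ^ 2 * (a γ * t ^ 2 + ∑ β ∈ univ.erase γ, a β * p β ^ 2))
      (q α ^ 2 * (a γ * ((2 : ℕ) * p γ ^ 1))) (p γ) :=
    (((hasDerivAt_pow 2 (p γ)).const_mul (a γ)).add_const _).const_mul _
  rw [h.deriv]
  push_cast
  ring

lemma pderivQ_A {m : ℕ} (a : Fin m → ℝ) (α γ : Fin m) (p q : Fin m → ℝ) :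
    pderivQ (Afun a α) γ p q = if α = γ then 2 * q α * Jfun a p else 0 := by
  unfold pderivQ Afun
  by_cases h : α = γ
  · subst h
    simp only [Function.update_self, if_pos rfl]
    have h2 : HasDerivAt (fun t : ℝ => t ^ 2 * Jfun a p) ((2 : ℕ) * q α ^ 1 * Jfun a p) (q α) :=
      (hasDerivAt_pow 2 (q α)).mul_const _
    rw [h2.deriv]
    push_cast
    ring
  · simp only [Function.update_of_ne h, if_neg h]
    exact deriv_const _ _

lemma pderivP_B {m : ℕ} (a : Fin m → ℝ) (α γ : Fin m) (p q : Fin m → ℝ) :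
    pderivP (Bfun a α) γ p q = ∑ δ ∈ univ \ {α},
      2 * Mfun a α δ p q * ((if α = γ then a α * q δ else 0) - (if δ = γ then a δ * q α else 0))
        / (a α - a δ) := by
  unfold pderivP Bfun
  refine HasDerivAt.deriv (HasDerivAt.fun_sum fun δ _ => ?_)
  have := ((hasDerivAt_M_P a α δ γ p q).fun_pow 2).div_const (a α - a δ)
  simp only [Function.update_eq_self, pow_one, Nat.cast_ofNat] at this
  convert this using 1
  · rfl
  · norm_num

lemma pderivQ_B {m : ℕ} (a : Fin m → ℝ) (α γ : Fin m) (p q : Fin m → ℝ) :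
    pderivQ (Bfun a α) γ p q = ∑ δ ∈ univ \ {α},
      2 * Mfun a α δ p q * ((if δ = γ then a α * p α else 0) - (if α = γ then a δ * p δ else 0))
        / (a α - a δ) := by
  unfold pderivQ Bfun
  refine HasDerivAt.deriv (HasDerivAt.fun_sum fun δ _ => ?_)
  have := ((hasDerivAt_M_Q a α δ γ p q).fun_pow 2).div_const (a α - a δ)
  simp only [Function.update_eq_self, pow_one, Nat.cast_ofNat] at this
  convert this using 1
  · rfl
  · norm_num

lemma pderivP_B_eq {m : ℕ} (a : Fin m → ℝ) (α : Fin m) (p q : Fin m → ℝ) :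
    pderivP (Bfun a α) α p q
      = ∑ δ ∈ univ \ {α}, 2 * a α * q δ * Mfun a α δ p q / (a α - a δ) := by
  rw [pderivP_B]
  refine Finset.sum_congr rfl fun δ hδ => ?_
  have hδα : δ ≠ α := by simpa using (Finset.mem_sdiff.mp hδ).2
  rw [if_pos rfl, if_neg hδα]
  ring

lemma pderivQ_B_eq {m : ℕ} (a : Fin m → ℝ) (α : Fin m) (p q : Fin m → ℝ) :
    pderivQ (Bfun a α) α p q
      = ∑ δ ∈ univ \ {α}, -(2 * a δ * p δ * Mfun a α δ p q) / (a α - a δ) := by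
  rw [pderivQ_B]
  refine Finset.sum_congr rfl fun δ hδ => ?_
  have hδα : δ ≠ α := by simpa using (Finset.mem_sdiff.mp hδ).2
  rw [if_neg hδα, if_pos rfl]
  ring

lemma pderivP_B_ne {m : ℕ} (a : Fin m → ℝ) (α γ : Fin m) (p q : Fin m → ℝ) (h : γ ≠ α) :
    pderivP (Bfun a α) γ p q = -(2 * a γ * q α * Mfun a α γ p q) / (a α - a γ) := by
  rw [pderivP_B]
  rw [Finset.sum_eq_single_of_mem γ (by simp [h])]
  · rw [if_neg (fun hh => h hh.symm), if_pos rfl]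
    ring
  · intro δ hδ hδγ
    rw [if_neg (fun hh => h hh.symm), if_neg hδγ]
    simp

lemma pderivQ_B_ne {m : ℕ} (a : Fin m → ℝ) (α γ : Fin m) (p q : Fin m → ℝ) (h : γ ≠ α) :
    pderivQ (Bfun a α) γ p q = 2 * a α * p α * Mfun a α γ p q / (a α - a γ) := by
  rw [pderivQ_B]
  rw [Finset.sum_eq_single_of_mem γ (by simp [h])]
  · rw [if_pos rfl, if_neg (fun hh => h hh.symm)]
    ring
  · intro δ hδ hδγ
    rw [if_neg hδγ, if_neg (fun hh => h hh.symm)]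
    simp

lemma partI {m : ℕ} (a : Fin m → ℝ) (α β : Fin m) (p q : Fin m → ℝ) :
    pbracket (Afun a α) (Afun a β) p q = -4 * Jfun a p * q α * q β * Mfun a α β p q := by
  unfold pbracket
  simp only [pderivP_A, pderivQ_A, mul_ite, ite_mul, mul_zero, zero_mul]
  rw [Finset.sum_sub_distrib, Finset.sum_ite_eq, Finset.sum_ite_eq]
  simp only [Finset.mem_univ, if_true]
  simp only [Mfun]
  ring

lemma partII {m : ℕ} (a : Fin m → ℝ) (α β : Fin m) (hab : α ≠ β)
    (h1 : a α - a β ≠ 0) (p q : Fin m → ℝ) :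
    pbracket (Afun a α) (Bfun a β) p q
      = 4 * Jfun a p * a α * q α * q β * Mfun a α β p q / (a α - a β) := by
  have h2 : a β - a α ≠ 0 := by intro h; apply h1; linarith
  unfold pbracket
  simp only [pderivP_A, pderivQ_A, ite_mul, zero_mul]
  rw [Finset.sum_sub_distrib, Finset.sum_ite_eq]
  simp only [Finset.mem_univ, if_true]
  rw [pderivP_B_ne a β α p q hab]
  have hsum : ∑ γ ∈ univ.erase β, 2 * q α ^ 2 * a γ * p γ * pderivQ (Bfun a β) γ p q
      = ∑ γ ∈ univ.erase β,
          2 * q α ^ 2 * a γ * p γ * (2 * a β * p β * Mfun a β γ p q / (a β - a γ)) :=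
    Finset.sum_congr rfl (fun γ hγ => by
      rw [pderivQ_B_ne a β γ p q (Finset.ne_of_mem_erase hγ)])
  have hβterm : 2 * q α ^ 2 * a β * p β * pderivQ (Bfun a β) β p q
      = ∑ γ ∈ univ.erase β,
          2 * q α ^ 2 * a β * p β * (-(2 * a γ * p γ * Mfun a β γ p q) / (a β - a γ)) := by
    rw [pderivQ_B_eq, Finset.mul_sum, Finset.erase_eq]
  rw [← Finset.add_sum_erase _
    (fun γ => 2 * q α ^ 2 * a γ * p γ * pderivQ (Bfun a β) γ p q) (Finset.mem_univ β)]
  rw [hβterm, hsum, ← Finset.sum_add_distrib,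
    Finset.sum_eq_zero (fun γ _ => by ring)]
  simp only [Mfun]
  field_simp
  ring

lemma partIII {m : ℕ} (a : Fin m → ℝ) (hinj : Function.Injective a) (α β : Fin m)
    (p q : Fin m → ℝ) :
    pbracket (Bfun a α) (Bfun a β) p q = 0 := by
  by_cases hab : α = β
  · subst hab
    unfold pbracket
    exact Finset.sum_eq_zero fun γ _ => by ring
  have h1 : a α - a β ≠ 0 := sub_ne_zero.mpr fun h => hab (hinj h)
  have h2 : a β - a α ≠ 0 := sub_ne_zero.mpr fun h => hab (hinj h).symm
  have hsets : (univ \ {α, β} : Finset (Fin m)) = (univ \ {α}).erase β := by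
    ext x; simp only [Finset.mem_sdiff, Finset.mem_erase, Finset.mem_univ,
      Finset.mem_insert, Finset.mem_singleton, true_and]; tauto
  have hsets' : (univ \ {α, β} : Finset (Fin m)) = (univ \ {β}).erase α := by
    ext x; simp only [Finset.mem_sdiff, Finset.mem_erase, Finset.mem_univ,
      Finset.mem_insert, Finset.mem_singleton, true_and]; tauto
  unfold pbracket
  rw [← Finset.sum_sdiff (Finset.subset_univ ({α, β} : Finset (Fin m))), Finset.sum_pair hab]
  have hfα : pderivP (Bfun a α) α p q * pderivQ (Bfun a β) α p q -
      pderivQ (Bfun a α) α p q * pderivP (Bfun a β) α p q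
      = ∑ δ ∈ univ \ {α, β},
          (2 * a α * q δ * Mfun a α δ p q / (a α - a δ)
              * (2 * a β * p β * Mfun a β α p q / (a β - a α))
            - -(2 * a δ * p δ * Mfun a α δ p q) / (a α - a δ)
              * (-(2 * a α * q β * Mfun a β α p q) / (a β - a α))) := by
    rw [pderivP_B_eq, pderivQ_B_eq, pderivQ_B_ne a β α p q hab, pderivP_B_ne a β α p q hab]
    rw [Finset.sum_mul, Finset.sum_mul, ← Finset.sum_sub_distrib, hsets]
    exact (Finset.sum_erase _ (by ring)).symm
  have hfβ : pderivP (Bfun a α) β p q * pderivQ (Bfun a β) β p q -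
      pderivQ (Bfun a α) β p q * pderivP (Bfun a β) β p q
      = ∑ δ ∈ univ \ {α, β},
          (-(2 * a β * q α * Mfun a α β p q) / (a α - a β)
              * (-(2 * a δ * p δ * Mfun a β δ p q) / (a β - a δ))
            - 2 * a α * p α * Mfun a α β p q / (a α - a β)
              * (2 * a β * q δ * Mfun a β δ p q / (a β - a δ))) := by
    rw [pderivP_B_eq, pderivQ_B_eq, pderivQ_B_ne a α β p q (Ne.symm hab),
      pderivP_B_ne a α β p q (Ne.symm hab)]
    rw [Finset.mul_sum, Finset.mul_sum, ← Finset.sum_sub_distrib, hsets']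
    exact (Finset.sum_erase _ (by ring)).symm
  have hrest : ∑ γ ∈ univ \ {α, β},
      (pderivP (Bfun a α) γ p q * pderivQ (Bfun a β) γ p q -
        pderivQ (Bfun a α) γ p q * pderivP (Bfun a β) γ p q)
      = ∑ γ ∈ univ \ {α, β},
          (-(2 * a γ * q α * Mfun a α γ p q) / (a α - a γ)
              * (2 * a β * p β * Mfun a β γ p q / (a β - a γ))
            - 2 * a α * p α * Mfun a α γ p q / (a α - a γ)
              * (-(2 * a γ * q β * Mfun a β γ p q) / (a β - a γ))) := by
    refine Finset.sum_congr rfl fun γ hγ => ?_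
    have hγ' : γ ≠ α ∧ γ ≠ β := by
      have := (Finset.mem_sdiff.mp hγ).2
      simpa [not_or] using this
    rw [pderivP_B_ne a α γ p q hγ'.1, pderivQ_B_ne a α γ p q hγ'.1,
      pderivP_B_ne a β γ p q hγ'.2, pderivQ_B_ne a β γ p q hγ'.2]
  rw [hrest, hfα, hfβ, ← Finset.sum_add_distrib, ← Finset.sum_add_distrib]
  refine Finset.sum_eq_zero fun γ hγ => ?_
  have hγ' : γ ≠ α ∧ γ ≠ β := by
    have := (Finset.mem_sdiff.mp hγ).2
    simpa [not_or] using this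
  have h3 : a α - a γ ≠ 0 := sub_ne_zero.mpr fun h => hγ'.1 (hinj h).symm
  have h4 : a β - a γ ≠ 0 := sub_ne_zero.mpr fun h => hγ'.2 (hinj h).symm
  simp only [Mfun]
  field_simp
  ring

/-- the Poisson bracket identities
(i) `{A_α, A_β} = −4 J q_α q_β M_{αβ}`,
(ii) `{A_α, B_β} = 4 J a_α q_α q_β M_{αβ}/(a_α − a_β)` for `α ≠ β`,
(iii) `{B_α, B_β} = 0`, identically on `ℝ^{n+1} × ℝ^{n+1}`. -/
theorem dualMoser_building_blocks (n : ℕ) (hn : 1 ≤ n)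
    (a : Fin (n + 1) → ℝ) (ha0 : 0 < a 0) (hmono : StrictMono a) :
    (∀ (α β : Fin (n + 1)) (p q : Fin (n + 1) → ℝ),
      pbracket (Afun a α) (Afun a β) p q
        = -4 * Jfun a p * q α * q β * Mfun a α β p q) ∧
    (∀ (α β : Fin (n + 1)), α ≠ β → ∀ (p q : Fin (n + 1) → ℝ),
      pbracket (Afun a α) (Bfun a β) p q
        = 4 * Jfun a p * a α * q α * q β * Mfun a α β p q / (a α - a β)) ∧
    (∀ (α β : Fin (n + 1)) (p q : Fin (n + 1) → ℝ),
      pbracket (Bfun a α) (Bfun a β) p q = 0) :=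
  ⟨fun α β p q => partI a α β p q,
   fun α β hab p q => partII a α β hab (sub_ne_zero.mpr (hmono.injective.ne hab)) p q,
   fun α β p q => partIII a hmono.injective α β p q⟩
end

section
/- The dual Moser functions satisfy the following three polynomial identities, valid for all (p,q) ∈ ℝ^{n+1} × ℝ^{n+1}: (i) Σ_{α=0}^n F_α = (Σ_{α=0}^n q_α²)(Σ_{β=0}^n a_β p_β²); (ii) Σ_{α=0}^n F_α/a_α = (Σ_{α=0}^n p_α q_α)²; (iii) Σ_{α=0}^n F_α/a_α² = −2H + 2 (Σ_{α=0}^n p_α q_α)(Σ_{β=0}^n p_β q_β/a_β), where H(p,q) = ½ (Σ_{α} q_α²/a_α)(Σ_{β} p_β²). -/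
open Finset

private lemma symm_sum_eq {m : ℕ} (f g : Fin m → Fin m → ℝ)
    (h : ∀ α β, f α β + f β α = g α β + g β α) :
    ∑ α, ∑ β, f α β = ∑ α, ∑ β, g α β := by
  have key : ∀ F : Fin m → Fin m → ℝ,
      ∑ α, ∑ β, (F α β + F β α) = 2 * ∑ α, ∑ β, F α β := by
    intro F
    rw [Finset.sum_congr rfl fun α _ => Finset.sum_add_distrib,
      Finset.sum_add_distrib]
    conv_lhs => rw [Finset.sum_comm (f := fun α β => F β α)]
    ring
  have hf := key f
  have hg := key g
  have heq : ∑ α, ∑ β, (f α β + f β α) = ∑ α, ∑ β, (g α β + g β α) :=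
    Finset.sum_congr rfl fun α _ => Finset.sum_congr rfl fun β _ => h α β
  rw [hf, hg] at heq
  linarith

/-- three polynomial identities for the dual Moser functions:
(i) `Σ_α F_α = (Σ_α q_α²)(Σ_β a_β p_β²)`;
(ii) `Σ_α F_α/a_α = (Σ_α p_α q_α)²`;
(iii) `Σ_α F_α/a_α² = −2H + 2 (Σ_α p_α q_α)(Σ_β p_β q_β/a_β)` where
`H = ½ (Σ_α q_α²/a_α)(Σ_β p_β²)`. -/
theorem dualMoser_sum_identities (n : ℕ) (hn : 1 ≤ n)
    (a : Fin (n + 1) → ℝ) (ha0 : 0 < a 0) (hmono : StrictMono a)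
    (p q : Fin (n + 1) → ℝ) :
    (∑ α, dualMoser a α p q) = (∑ α, (q α) ^ 2) * (∑ β, a β * (p β) ^ 2) ∧
    (∑ α, dualMoser a α p q / a α) = (∑ α, p α * q α) ^ 2 ∧
    (∑ α, dualMoser a α p q / (a α) ^ 2)
      = -2 * ((1 / 2) * (∑ α, (q α) ^ 2 / a α) * ∑ β, (p β) ^ 2)
        + 2 * (∑ α, p α * q α) * (∑ β, p β * q β / a β) := by
  have hapos : ∀ α, 0 < a α := fun α => ha0.trans_le (hmono.monotone (Fin.zero_le α))
  have hane : ∀ α, a α ≠ 0 := fun α => (hapos α).ne'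
  have hsub : ∀ α β : Fin (n+1), α ≠ β → a α - a β ≠ 0 :=
    fun α β hab => sub_ne_zero.mpr (fun h => hab (hmono.injective h))
  have hF : ∀ α, dualMoser a α p q
      = (q α) ^ 2 * (∑ β, a β * (p β) ^ 2)
        + ∑ β, (a α * p α * q β - a β * p β * q α) ^ 2 / (a α - a β) := by
    intro α
    unfold dualMoser
    congr 1
    apply Finset.sum_subset Finset.sdiff_subset
    intro β _ hβ
    have hβα : β = α := by simpa using hβ
    subst hβα
    simp
  refine ⟨?_, ?_, ?_⟩
  · -- identity (i)
    have h1 : ∑ α, dualMoser a α p q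
        = ∑ α, ∑ β, ((q α) ^ 2 * (a β * (p β) ^ 2)
            + (a α * p α * q β - a β * p β * q α) ^ 2 / (a α - a β)) := by
      refine Finset.sum_congr rfl fun α _ => ?_
      rw [hF α, Finset.mul_sum, ← Finset.sum_add_distrib]
    rw [h1, Finset.sum_mul_sum]
    apply symm_sum_eq
    intro α β
    rcases eq_or_ne α β with rfl | hab
    · simp
    · have h1 := hsub α β hab
      have h2 := hsub β α hab.symm
      field_simp
      ring
  · -- identity (ii)
    have h1 : ∑ α, dualMoser a α p q / a α
        = ∑ α, ∑ β, ((q α) ^ 2 * (a β * (p β) ^ 2) / a α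
            + (a α * p α * q β - a β * p β * q α) ^ 2 / (a α - a β) / a α) := by
      refine Finset.sum_congr rfl fun α _ => ?_
      rw [hF α, add_div, Finset.mul_sum, Finset.sum_div, Finset.sum_div,
        ← Finset.sum_add_distrib]
    rw [h1, sq, Finset.sum_mul_sum]
    apply symm_sum_eq
    intro α β
    rcases eq_or_ne α β with rfl | hab
    · have := hane α
      field_simp
      ring
    · have h1 := hsub α β hab
      have h2 := hsub β α hab.symm
      have h3 := hane α
      have h4 := hane β
      field_simp
      ring
  · -- identity (iii)
    have h1 : ∑ α, dualMoser a α p q / (a α) ^ 2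
        = ∑ α, ∑ β, ((q α) ^ 2 * (a β * (p β) ^ 2) / (a α) ^ 2
            + (a α * p α * q β - a β * p β * q α) ^ 2 / (a α - a β) / (a α) ^ 2) := by
      refine Finset.sum_congr rfl fun α _ => ?_
      rw [hF α, add_div, Finset.mul_sum, Finset.sum_div, Finset.sum_div,
        ← Finset.sum_add_distrib]
    have h2 : -2 * ((1 / 2) * (∑ α, (q α) ^ 2 / a α) * ∑ β, (p β) ^ 2)
          + 2 * (∑ α, p α * q α) * (∑ β, p β * q β / a β)
        = ∑ α, ∑ β, (2 * (p α * q α) * (p β * q β / a β)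
            - (q α) ^ 2 / a α * (p β) ^ 2) := by
      rw [eq_comm]
      simp only [Finset.sum_sub_distrib, mul_assoc, ← Finset.mul_sum]
      simp only [← mul_assoc, ← Finset.sum_mul]
      ring
    rw [h1, h2]
    apply symm_sum_eq
    intro α β
    rcases eq_or_ne α β with rfl | hab
    · have := hane α
      field_simp
      ring
    · have h1 := hsub α β hab
      have h2 := hsub β α hab.symm
      have h3 := hane α
      have h4 := hane β
      field_simp
      ring
end

section
/- For every real λ with λ ∉ {a_0,…,a_n}, the partial-fraction identity Σ_{α=0}^n q_α²(x)/(a_α − λ) = − ∏_{i=1}^n (λ − xⁱ) / ∏_{α=0}^n (λ − a_α) holds, where q_α²(x) = ∏_{i=1}^n (a_α − xⁱ) / ∏_{β≠α} (a_α − a_β). -/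
open Finset

private lemma aux_term (N D c L : ℝ) (hD : D ≠ 0) (hc : c ≠ 0) (hL : L ≠ 0) :
    (N / D) / c = -(N * (D⁻¹ * L)) / ((-c) * L) := by
  field_simp

/-- the partial-fraction identity
`Σ_α q_α²(x)/(a_α − λ) = − ∏_i (λ − xⁱ) / ∏_α (λ − a_α)` for `λ ∉ {a_0,…,a_n}`,
where `q_α²(x) = ∏_i (a_α − xⁱ) / ∏_{β≠α} (a_α − a_β)`. -/
theorem partial_fraction_identity (n : ℕ) (hn : 1 ≤ n)
    (a : Fin (n + 1) → ℝ) (ha : Function.Injective a)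
    (x : Fin n → ℝ) (lam : ℝ) (hlam : ∀ α, lam ≠ a α) :
    ∑ α, ((∏ i, (a α - x i)) / ∏ β ∈ univ \ {α}, (a α - a β)) / (a α - lam)
      = -(∏ i, (lam - x i)) / ∏ α, (lam - a α) := by
  classical
  set P : Polynomial ℝ := ∏ i, (Polynomial.X - Polynomial.C (x i)) with hPdef
  have hinj : Set.InjOn a (univ : Finset (Fin (n+1))) := ha.injOn
  have hdeg : P.degree < #(univ : Finset (Fin (n+1))) := by
    have h1 : P.degree = n := by
      rw [hPdef, Polynomial.degree_prod]
      simp [Polynomial.degree_X_sub_C]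
    rw [h1]
    simp only [card_univ, Fintype.card_fin]
    exact_mod_cast Nat.lt_succ_self n
  have key := congrArg (Polynomial.eval lam) (Lagrange.eq_interpolate hinj hdeg)
  simp only [Lagrange.interpolate_apply, Lagrange.basis, Lagrange.basisDivisor,
    Polynomial.eval_prod, Polynomial.eval_finset_sum, Polynomial.eval_mul,
    Polynomial.eval_sub, Polynomial.eval_X, Polynomial.eval_C, hPdef] at key
  rw [neg_div, key, neg_div', ← Finset.sum_neg_distrib, Finset.sum_div]
  refine Finset.sum_congr rfl fun α _ => ?_
  have hD : ∏ β ∈ univ.erase α, (a α - a β) ≠ 0 := by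
    refine Finset.prod_ne_zero_iff.mpr fun β hβ => sub_ne_zero.mpr ?_
    exact fun h => (Finset.mem_erase.mp hβ).1 (ha h).symm
  have hL : ∀ β, lam - a β ≠ 0 := fun β => sub_ne_zero.mpr (hlam β)
  have hAL : a α - lam ≠ 0 := fun h => (hL α) (by linarith [sub_eq_zero.mp h])
  have hLa : ∏ β ∈ univ.erase α, (lam - a β) ≠ 0 :=
    Finset.prod_ne_zero_iff.mpr fun β _ => hL β
  have hsplit : ∏ β, (lam - a β) = (lam - a α) * ∏ β ∈ univ.erase α, (lam - a β) :=
    (Finset.mul_prod_erase univ _ (mem_univ α)).symm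
  rw [Finset.sdiff_singleton_eq_erase, hsplit, Finset.prod_mul_distrib,
    Finset.prod_inv_distrib, show lam - a α = -(a α - lam) by ring]
  exact aux_term _ _ _ _ hD hAL hLa
end

section
/- Let q : {0,…,n} → ℝ satisfy q_α² = ∏_{i=1}^n (a_α − xⁱ)/∏_{β≠α}(a_α − a_β) for each α, set B = Σ_{α=0}^n q_α²/a_α, g_i(x) = −(1/(4B)) ∏_{j≠i}(xⁱ − xʲ)/∏_{α=0}^n (xⁱ − a_α) and gⁱ(x) = 1/g_i(x). Given ξ ∈ ℝⁿ, define p_α = −(q_α/(2B)) Σ_{i=1}^n gⁱ(x) ξ_i/(a_α − xⁱ). Then, for every α ∈ {0,…,n}, the dual Moser function evaluated at (p, q) equals F_α(p,q) = (a_α q_α²/B) Σ_{i=1}^n xⁱ gⁱ(x) ξ_i² / (a_α − xⁱ). -/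
open Finset Polynomial

theorem lagrange_coeff_sum {m : ℕ} (a : Fin (m + 1) → ℝ) (ha : Function.Injective a)
    (P : ℝ[X]) (hP : P.natDegree ≤ m) :
    ∑ β, P.eval (a β) / ∏ γ ∈ univ \ {β}, (a β - a γ) = P.coeff m := by
  classical
  have hinj : Set.InjOn a (univ : Finset (Fin (m+1))) := ha.injOn
  have hcard : ((univ : Finset (Fin (m+1))).card) = m + 1 := by simp
  have hdeg : P.degree < ((univ : Finset (Fin (m+1))).card : ℕ) := by
    rw [hcard]
    exact lt_of_le_of_lt P.degree_le_natDegree (by exact_mod_cast Nat.lt_succ_of_le hP)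
  have hP2 := Lagrange.eq_interpolate hinj hdeg
  have hco := congrArg (fun Q => Polynomial.coeff Q m) hP2
  simp only [Lagrange.interpolate_apply, Polynomial.finset_sum_coeff,
    Polynomial.coeff_C_mul, Function.comp] at hco
  rw [hco]
  refine Finset.sum_congr rfl fun β _ => ?_
  have hb : (Lagrange.basis univ a β).natDegree = m := by
    rw [Lagrange.natDegree_basis hinj (mem_univ β), hcard]; omega
  have hlead : (Lagrange.basis univ a β).coeff m = ∏ γ ∈ univ.erase β, (a β - a γ)⁻¹ := by
    have hcn : (Lagrange.basis univ a β).coeff (Lagrange.basis univ a β).natDegree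
        = (Lagrange.basis univ a β).leadingCoeff := Polynomial.coeff_natDegree
    rw [hb] at hcn
    rw [hcn]
    unfold Lagrange.basis
    rw [Polynomial.leadingCoeff_prod]
    refine Finset.prod_congr rfl fun γ hγ => ?_
    rw [Lagrange.basisDivisor, Polynomial.leadingCoeff_mul, Polynomial.leadingCoeff_C,
      Polynomial.leadingCoeff_X_sub_C, mul_one]
  rw [hlead, ← Finset.erase_eq, Finset.prod_inv_distrib, ← div_eq_mul_inv]

theorem lagrange_sum_zero {m : ℕ} (a : Fin (m + 1) → ℝ) (ha : Function.Injective a)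
    (P : ℝ[X]) (hP : P.natDegree < m) :
    ∑ β, P.eval (a β) / ∏ γ ∈ univ \ {β}, (a β - a γ) = 0 := by
  rw [lagrange_coeff_sum a ha P hP.le]
  exact Polynomial.coeff_eq_zero_of_natDegree_lt hP

theorem prod_sub_ne_zero {m : ℕ} (a : Fin (m + 1) → ℝ) (ha : Function.Injective a)
    (β : Fin (m + 1)) : ∏ γ ∈ univ \ {β}, (a β - a γ) ≠ 0 := by
  refine Finset.prod_ne_zero_iff.mpr fun γ hγ => sub_ne_zero.mpr fun h => ?_
  simp only [Finset.mem_sdiff, Finset.mem_singleton] at hγ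
  exact hγ.2 (ha h).symm

theorem lagrange_inv_sum {m : ℕ} (a : Fin (m + 1) → ℝ) (ha : Function.Injective a)
    (c : ℝ) (hc : ∀ β, a β - c ≠ 0) :
    ∑ β, 1 / ((a β - c) * ∏ γ ∈ univ \ {β}, (a β - a γ)) = -(∏ β, (c - a β))⁻¹ := by
  classical
  set V : ℝ[X] := ∏ β, (X - C (a β)) with hV
  have hVmonic : V.Monic := monic_prod_of_monic _ _ fun _ _ => monic_X_sub_C _
  have hVdeg : V.natDegree = m + 1 := by
    rw [hV, Polynomial.natDegree_prod_of_monic _ _ fun _ _ => monic_X_sub_C _]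
    simp [Polynomial.natDegree_X_sub_C]
  have hVc : V.eval c = ∏ β, (c - a β) := by
    rw [hV, Polynomial.eval_prod]; simp
  have hVcne : V.eval c ≠ 0 := by
    rw [hVc]
    exact Finset.prod_ne_zero_iff.mpr fun β _ => fun h => hc β (by linarith [sub_eq_zero.mpr h.symm])
  obtain ⟨W, hW⟩ : (X - C c) ∣ (V - C (V.eval c)) := Polynomial.X_sub_C_dvd_sub_C_eval
  have hsubne : V - C (V.eval c) ≠ 0 := fun h => by
    have h2 := congrArg Polynomial.natDegree (sub_eq_zero.mp h)
    rw [hVdeg, Polynomial.natDegree_C] at h2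
    exact Nat.succ_ne_zero m h2
  have hWne : W ≠ 0 := fun h => hsubne (by rw [hW, h, mul_zero])
  have hsubdeg : (V - C (V.eval c)).natDegree = m + 1 := by
    rw [Polynomial.natDegree_sub_C, hVdeg]
  have hWdeg : W.natDegree = m := by
    have := hsubdeg
    rw [hW, Polynomial.natDegree_mul (Polynomial.X_sub_C_ne_zero c) hWne,
      Polynomial.natDegree_X_sub_C] at this
    omega
  have hWcoeff : W.coeff m = 1 := by
    have h1 : (V - C (V.eval c)).coeff (m + 1) = 1 := by
      rw [Polynomial.coeff_sub, Polynomial.coeff_C]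
      simp only [Nat.succ_ne_zero, if_false, sub_zero]
      have := hVmonic.coeff_natDegree
      rwa [hVdeg] at this
    rw [hW] at h1
    have h2 : ((X - C c) * W).leadingCoeff = W.leadingCoeff := by
      rw [Polynomial.leadingCoeff_mul, Polynomial.leadingCoeff_X_sub_C, one_mul]
    have h3 : ((X - C c) * W).natDegree = m + 1 := by rw [← hW]; exact hsubdeg
    have h4 : ((X - C c) * W).coeff (m + 1) = W.coeff m := by
      conv_lhs => rw [show m + 1 = ((X - C c) * W).natDegree from h3.symm]
      rw [Polynomial.coeff_natDegree, h2, ← hWdeg, Polynomial.coeff_natDegree]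
    rw [h4] at h1
    exact h1
  have hWeval : ∀ β, W.eval (a β) * (a β - c) = -(V.eval c) := by
    intro β
    have hVz : V.eval (a β) = 0 := by
      rw [hV, Polynomial.eval_prod]
      exact Finset.prod_eq_zero (mem_univ β) (by simp)
    have := congrArg (Polynomial.eval (a β)) hW
    simp only [Polynomial.eval_sub, Polynomial.eval_mul, Polynomial.eval_C, Polynomial.eval_X,
      hVz] at this
    linarith [this]
  have hsum := lagrange_coeff_sum a ha W hWdeg.le
  rw [hWcoeff] at hsum
  have key : ∀ β : Fin (m + 1), 1 / ((a β - c) * ∏ γ ∈ univ \ {β}, (a β - a γ))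
      = (W.eval (a β) / ∏ γ ∈ univ \ {β}, (a β - a γ)) * (-(V.eval c)⁻¹) := by
    intro β
    have hd := prod_sub_ne_zero a ha β
    have hWe : W.eval (a β) = -(V.eval c) / (a β - c) := by
      rw [eq_div_iff (hc β)]; exact hWeval β
    have h6 : W.eval (a β) / (∏ γ ∈ univ \ {β}, (a β - a γ)) * (-(V.eval c)⁻¹)
        = (V.eval c * (V.eval c)⁻¹) * (1 / (a β - c) / ∏ γ ∈ univ \ {β}, (a β - a γ)) := by
      rw [hWe]; ring
    rw [h6, mul_inv_cancel₀ hVcne, one_mul, div_div]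
  rw [Finset.sum_congr rfl fun β _ => key β, ← Finset.sum_mul, hsum, one_mul, hVc]

theorem lagrange_main {m : ℕ} (a : Fin (m + 1) → ℝ) (ha : Function.Injective a)
    (Q : ℝ[X]) (hQ : Q.natDegree ≤ m) (c : ℝ) (hc : ∀ β, a β - c ≠ 0) :
    ∑ β, Q.eval (a β) / ((a β - c) * ∏ γ ∈ univ \ {β}, (a β - a γ))
      = -(Q.eval c) / ∏ β, (c - a β) := by
  classical
  obtain ⟨D, hD⟩ : (X - C c) ∣ (Q - C (Q.eval c)) := Polynomial.X_sub_C_dvd_sub_C_eval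
  have hDcoeff : D.coeff m = 0 := by
    by_cases hD0 : D = 0
    · simp [hD0]
    · refine Polynomial.coeff_eq_zero_of_natDegree_lt ?_
      have hne : Q - C (Q.eval c) ≠ 0 := fun h => by
        rw [h, zero_eq_mul] at hD
        exact absurd hD (by simp [Polynomial.X_sub_C_ne_zero, hD0])
      have h1 : (Q - C (Q.eval c)).natDegree ≤ m := by
        rw [Polynomial.natDegree_sub_C]; exact hQ
      rw [hD, Polynomial.natDegree_mul (Polynomial.X_sub_C_ne_zero c) hD0,
        Polynomial.natDegree_X_sub_C] at h1
      omega
  have hDdeg : D.natDegree ≤ m := by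
    by_cases hD0 : D = 0
    · simp [hD0]
    · have h1 : (Q - C (Q.eval c)).natDegree ≤ m := by
        rw [Polynomial.natDegree_sub_C]; exact hQ
      rw [hD, Polynomial.natDegree_mul (Polynomial.X_sub_C_ne_zero c) hD0,
        Polynomial.natDegree_X_sub_C] at h1
      omega
  have hDsum := lagrange_coeff_sum a ha D hDdeg
  rw [hDcoeff] at hDsum
  have hinv := lagrange_inv_sum a ha c hc
  have key : ∀ β : Fin (m + 1), Q.eval (a β) / ((a β - c) * ∏ γ ∈ univ \ {β}, (a β - a γ))
      = D.eval (a β) / ∏ γ ∈ univ \ {β}, (a β - a γ)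
        + Q.eval c * (1 / ((a β - c) * ∏ γ ∈ univ \ {β}, (a β - a γ))) := by
    intro β
    have hd := prod_sub_ne_zero a ha β
    have he : Q.eval (a β) = (a β - c) * D.eval (a β) + Q.eval c := by
      have h5 := congrArg (Polynomial.eval (a β)) hD
      simp only [Polynomial.eval_sub, Polynomial.eval_mul, Polynomial.eval_C,
        Polynomial.eval_X] at h5
      linarith
    rw [he, add_div, mul_div_mul_left _ _ (hc β), mul_one_div]
  rw [Finset.sum_congr rfl fun β _ => key β, Finset.sum_add_distrib, hDsum, ← Finset.mul_sum,
    hinv, zero_add]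
  ring
set_option maxHeartbeats 2000000 in
/-- expression of the dual Moser functions in ellipsoidal
coordinates: `F_α(p,q) = (a_α q_α²/B) Σ_i xⁱ gⁱ(x) ξ_i² / (a_α − xⁱ)`. -/
theorem dualMoser_ellipsoidal (n : ℕ) (hn : 1 ≤ n)
    (a : Fin (n + 1) → ℝ) (ha0 : 0 < a 0) (hmono : StrictMono a)
    (x : Fin n → ℝ)
    (hx : ∀ i : Fin n, a i.castSucc < x i ∧ x i < a i.succ)
    (q : Fin (n + 1) → ℝ)
    (hq : ∀ α, (q α) ^ 2 = (∏ i, (a α - x i)) / ∏ β ∈ univ \ {α}, (a α - a β))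
    (B : ℝ) (hB : B = ∑ α, (q α) ^ 2 / a α)
    (g gi : Fin n → ℝ)
    (hg : ∀ i, g i
      = -(1 / (4 * B)) * (∏ j ∈ univ \ {i}, (x i - x j)) / ∏ α, (x i - a α))
    (hgi : ∀ i, gi i = (g i)⁻¹)
    (ξ : Fin n → ℝ)
    (p : Fin (n + 1) → ℝ)
    (hp : ∀ α, p α = -(q α / (2 * B)) * ∑ i, gi i * ξ i / (a α - x i))
    (α : Fin (n + 1)) :
    dualMoser a α p q
      = (a α * (q α) ^ 2 / B) * ∑ i, x i * gi i * (ξ i) ^ 2 / (a α - x i) := by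
  classical
  have haInj : Function.Injective a := hmono.injective
  have hax : ∀ (β : Fin (n + 1)) (i : Fin n), a β - x i ≠ 0 := by
    intro β i
    refine sub_ne_zero.mpr ?_
    rcases le_or_gt β i.castSucc with h | h
    · exact ne_of_lt (lt_of_le_of_lt (hmono.monotone h) (hx i).1)
    · have h2 : i.succ ≤ β := Fin.castSucc_lt_iff_succ_le.mp h
      exact ne_of_gt (lt_of_lt_of_le (hx i).2 (hmono.monotone h2))
  have hxlt : ∀ i j : Fin n, i < j → x i < x j := by
    intro i j hij
    have h1 : i.succ ≤ j.castSucc := by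
      rw [Fin.le_def]
      simp only [Fin.val_succ, Fin.coe_castSucc]
      exact Fin.lt_def.mp hij
    exact lt_of_lt_of_le (hx i).2 (lt_of_le_of_lt (hmono.monotone h1) (hx j).1).le
  have hxinj : ∀ i j : Fin n, i ≠ j → x i - x j ≠ 0 := by
    intro i j hij
    rcases lt_or_gt_of_ne hij with h | h
    · exact sub_ne_zero.mpr (ne_of_lt (hxlt _ _ h))
    · exact sub_ne_zero.mpr (ne_of_gt (hxlt _ _ h))
  have hapos : ∀ β, 0 < a β := fun β => lt_of_lt_of_le ha0 (hmono.monotone (Fin.zero_le β))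
  have hxpos : ∀ i, 0 < x i := fun i => lt_trans (hapos _) (hx i).1
  have hd : ∀ β : Fin (n + 1), ∏ γ ∈ univ \ {β}, (a β - a γ) ≠ 0 := prod_sub_ne_zero a haInj
  have hVx : ∀ i, ∏ β, (x i - a β) ≠ 0 := fun i =>
    Finset.prod_ne_zero_iff.mpr fun β _ => fun h => hax β i (by linarith [sub_eq_zero.mp h])
  have hPx : ∀ i, ∏ j ∈ univ \ {i}, (x i - x j) ≠ 0 := fun i =>
    Finset.prod_ne_zero_iff.mpr fun j hj => hxinj i j (by
      simp only [Finset.mem_sdiff, Finset.mem_singleton] at hj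
      exact fun h => hj.2 h.symm)
  -- B > 0
  have hBpos : 0 < B := by
    set U : ℝ[X] := ∏ i, (X - C (x i)) with hUdef
    have hUeval : ∀ t, U.eval t = ∏ i, (t - x i) := by
      intro t; simp [hUdef, Polynomial.eval_prod]
    have hUdeg : U.natDegree ≤ n := by
      rw [hUdef, Polynomial.natDegree_prod_of_monic _ _ fun _ _ => Polynomial.monic_X_sub_C _]
      simp
    have hc0 : ∀ β : Fin (n + 1), a β - 0 ≠ 0 := fun β => by simpa using (hapos β).ne'
    have hBsum := lagrange_main a haInj U hUdeg 0 hc0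
    have hBeq : B = -(U.eval 0) / ∏ β, (0 - a β) := by
      rw [hB, ← hBsum]
      refine Finset.sum_congr rfl fun β _ => ?_
      rw [hq β, hUeval, div_div, sub_zero, mul_comm]
    have h0x : U.eval 0 = (-1 : ℝ) ^ n * ∏ i, x i := by
      rw [hUeval]
      simp only [zero_sub]
      rw [show (fun i => -x i) = fun i => (-1) * x i from by funext i; ring]
      rw [Finset.prod_mul_distrib, Finset.prod_const]
      simp
    have h0a : ∏ β, ((0:ℝ) - a β) = (-1 : ℝ) ^ (n + 1) * ∏ β, a β := by
      simp only [zero_sub]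
      rw [show (fun β : Fin (n+1) => -a β) = fun β => (-1) * a β from by funext β; ring]
      rw [Finset.prod_mul_distrib, Finset.prod_const]
      simp
    have hprodx : 0 < ∏ i, x i := Finset.prod_pos fun i _ => hxpos i
    have hproda : 0 < ∏ β, a β := Finset.prod_pos fun β _ => hapos β
    have : B = (∏ i, x i) / ∏ β, a β := by
      rw [hBeq, h0x, h0a, div_eq_div_iff (by positivity) hproda.ne', pow_succ]
      ring
    rw [this]
    positivity
  have hBne : B ≠ 0 := hBpos.ne'
  have hgval : ∀ i, (∏ j ∈ univ \ {i}, (x i - x j)) = -(4 * B) * g i * ∏ β, (x i - a β) := by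
    intro i
    have h4B : (4 : ℝ) * B ≠ 0 := mul_ne_zero (by norm_num) hBne
    rw [hg i]
    field_simp
    rw [mul_div_assoc, div_self (hVx i), mul_one]
  have hgne : ∀ i, g i ≠ 0 := by
    intro i h0
    have h1 := hgval i
    rw [h0] at h1
    simp only [mul_zero, zero_mul] at h1
    exact hPx i h1
  have hgg : ∀ i, gi i * g i = 1 := fun i => by rw [hgi i]; exact inv_mul_cancel₀ (hgne i)
  -- the interpolation sum identities
  have mainA : ∀ i : Fin n,
      ∑ β, a β * q β ^ 2 / ((a β - x i) * (a β - x i)) = 4 * B * (x i * g i) := by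
    intro i
    set Pi : ℝ[X] := ∏ j ∈ univ \ {i}, (X - C (x j)) with hPidef
    have hPieval : ∀ t, Pi.eval t = ∏ j ∈ univ \ {i}, (t - x j) := by
      intro t; simp [hPidef, Polynomial.eval_prod]
    have hPine : Pi ≠ 0 := Finset.prod_ne_zero_iff.mpr fun j _ => Polynomial.X_sub_C_ne_zero _
    have hPideg : Pi.natDegree = n - 1 := by
      rw [hPidef, Polynomial.natDegree_prod_of_monic _ _ fun _ _ => Polynomial.monic_X_sub_C _]
      simp only [Polynomial.natDegree_X_sub_C, Finset.sum_const, smul_eq_mul, mul_one]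
      rw [Finset.card_sdiff_of_subset (by simp)]
      simp
    have hQdeg : (X * Pi).natDegree ≤ n := by
      rw [Polynomial.natDegree_X_mul hPine, hPideg]
      omega
    have hML := lagrange_main a haInj (X * Pi) hQdeg (x i) (fun β => hax β i)
    have hterm : ∀ β : Fin (n + 1), a β * q β ^ 2 / ((a β - x i) * (a β - x i))
        = (X * Pi).eval (a β) / ((a β - x i) * ∏ γ ∈ univ \ {β}, (a β - a γ)) := by
      intro β
      rw [hq β, Polynomial.eval_mul, Polynomial.eval_X, hPieval,
        Finset.prod_eq_prod_diff_singleton_mul (mem_univ i) (fun j => a β - x j)]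
      field_simp [hax β i, hd β]
    rw [Finset.sum_congr rfl fun β _ => hterm β, hML, Polynomial.eval_mul, Polynomial.eval_X,
      hPieval, hgval i, div_eq_iff (hVx i)]
    ring
  have mainB : ∀ i : Fin n,
      ∑ β ∈ univ \ {α}, q β ^ 2 * (a α - a β) / ((a β - x i) * (a β - x i))
        = 4 * B * ((a α - x i) * g i) := by
    intro i
    set Pi : ℝ[X] := ∏ j ∈ univ \ {i}, (X - C (x j)) with hPidef
    have hPieval : ∀ t, Pi.eval t = ∏ j ∈ univ \ {i}, (t - x j) := by
      intro t; simp [hPidef, Polynomial.eval_prod]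
    have hPine : Pi ≠ 0 := Finset.prod_ne_zero_iff.mpr fun j _ => Polynomial.X_sub_C_ne_zero _
    have hPideg : Pi.natDegree = n - 1 := by
      rw [hPidef, Polynomial.natDegree_prod_of_monic _ _ fun _ _ => Polynomial.monic_X_sub_C _]
      simp only [Polynomial.natDegree_X_sub_C, Finset.sum_const, smul_eq_mul, mul_one]
      rw [Finset.card_sdiff_of_subset (by simp)]
      simp
    have hCne : (C (a α) - X : ℝ[X]) ≠ 0 := by
      rw [show (C (a α) - X : ℝ[X]) = -(X - C (a α)) from by ring]
      exact neg_ne_zero.mpr (Polynomial.X_sub_C_ne_zero _)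
    have hCdeg : (C (a α) - X : ℝ[X]).natDegree = 1 := by
      rw [show (C (a α) - X : ℝ[X]) = -(X - C (a α)) from by ring,
        Polynomial.natDegree_neg, Polynomial.natDegree_X_sub_C]
    have hQdeg : ((C (a α) - X) * Pi).natDegree ≤ n := by
      rw [Polynomial.natDegree_mul hCne hPine, hCdeg, hPideg]
      omega
    have hML := lagrange_main a haInj ((C (a α) - X) * Pi) hQdeg (x i) (fun β => hax β i)
    have hext : ∑ β ∈ univ \ {α}, q β ^ 2 * (a α - a β) / ((a β - x i) * (a β - x i))
        = ∑ β, q β ^ 2 * (a α - a β) / ((a β - x i) * (a β - x i)) := by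
      refine Finset.sum_subset (Finset.sdiff_subset) fun β _ hβ => ?_
      have : β = α := by
        by_contra hne
        exact hβ (by simp [hne])
      rw [this, sub_self, mul_zero, zero_div]
    have hterm : ∀ β : Fin (n + 1), q β ^ 2 * (a α - a β) / ((a β - x i) * (a β - x i))
        = ((C (a α) - X) * Pi).eval (a β) / ((a β - x i) * ∏ γ ∈ univ \ {β}, (a β - a γ)) := by
      intro β
      rw [hq β, Polynomial.eval_mul, Polynomial.eval_sub, Polynomial.eval_C, Polynomial.eval_X,
        hPieval, Finset.prod_eq_prod_diff_singleton_mul (mem_univ i) (fun j => a β - x j)]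
      field_simp [hax β i, hd β]
    rw [hext, Finset.sum_congr rfl fun β _ => hterm β, hML, Polynomial.eval_mul,
      Polynomial.eval_sub, Polynomial.eval_C, Polynomial.eval_X, hPieval, hgval i,
      div_eq_iff (hVx i)]
    ring
  have mainC : ∀ i j : Fin n, i ≠ j →
      ∑ β, a β * q β ^ 2 / ((a β - x i) * (a β - x j)) = 0 := by
    intro i j hij
    have hji : j ∈ univ \ ({i} : Finset (Fin n)) := by simp [Ne.symm hij]
    set Pij : ℝ[X] := ∏ k ∈ (univ \ {i}) \ {j}, (X - C (x k)) with hPdef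
    have hPeval : ∀ t, Pij.eval t = ∏ k ∈ (univ \ {i}) \ {j}, (t - x k) := by
      intro t; simp [hPdef, Polynomial.eval_prod]
    have hPne : Pij ≠ 0 := Finset.prod_ne_zero_iff.mpr fun k _ => Polynomial.X_sub_C_ne_zero _
    have hn2 : 2 ≤ n := by
      have h1 : i.val ≠ j.val := fun h => hij (Fin.ext h)
      have := i.isLt; have := j.isLt; omega
    have hPdeg : Pij.natDegree = n - 2 := by
      rw [hPdef, Polynomial.natDegree_prod_of_monic _ _ fun _ _ => Polynomial.monic_X_sub_C _]
      simp only [Polynomial.natDegree_X_sub_C, Finset.sum_const, smul_eq_mul, mul_one]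
      rw [Finset.card_sdiff_of_subset (Finset.singleton_subset_iff.mpr hji),
        Finset.card_sdiff_of_subset (by simp)]
      simp
      omega
    have hQdeg : (X * Pij).natDegree < n := by
      rw [Polynomial.natDegree_X_mul hPne, hPdeg]
      omega
    have hterm : ∀ β : Fin (n + 1), a β * q β ^ 2 / ((a β - x i) * (a β - x j))
        = (X * Pij).eval (a β) / ∏ γ ∈ univ \ {β}, (a β - a γ) := by
      intro β
      rw [hq β, Polynomial.eval_mul, Polynomial.eval_X, hPeval,
        Finset.prod_eq_prod_diff_singleton_mul (mem_univ i) (fun k => a β - x k),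
        Finset.prod_eq_prod_diff_singleton_mul hji (fun k => a β - x k)]
      field_simp [hax β i, hax β j, hd β]
    rw [Finset.sum_congr rfl fun β _ => hterm β]
    exact lagrange_sum_zero a haInj _ hQdeg
  have mainD : ∀ i j : Fin n, i ≠ j →
      ∑ β ∈ univ \ {α}, q β ^ 2 * (a α - a β) / ((a β - x i) * (a β - x j)) = 0 := by
    intro i j hij
    have hji : j ∈ univ \ ({i} : Finset (Fin n)) := by simp [Ne.symm hij]
    set Pij : ℝ[X] := ∏ k ∈ (univ \ {i}) \ {j}, (X - C (x k)) with hPdef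
    have hPeval : ∀ t, Pij.eval t = ∏ k ∈ (univ \ {i}) \ {j}, (t - x k) := by
      intro t; simp [hPdef, Polynomial.eval_prod]
    have hPne : Pij ≠ 0 := Finset.prod_ne_zero_iff.mpr fun k _ => Polynomial.X_sub_C_ne_zero _
    have hn2 : 2 ≤ n := by
      have h1 : i.val ≠ j.val := fun h => hij (Fin.ext h)
      have := i.isLt; have := j.isLt; omega
    have hPdeg : Pij.natDegree = n - 2 := by
      rw [hPdef, Polynomial.natDegree_prod_of_monic _ _ fun _ _ => Polynomial.monic_X_sub_C _]
      simp only [Polynomial.natDegree_X_sub_C, Finset.sum_const, smul_eq_mul, mul_one]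
      rw [Finset.card_sdiff_of_subset (Finset.singleton_subset_iff.mpr hji),
        Finset.card_sdiff_of_subset (by simp)]
      simp
      omega
    have hCne : (C (a α) - X : ℝ[X]) ≠ 0 := by
      rw [show (C (a α) - X : ℝ[X]) = -(X - C (a α)) from by ring]
      exact neg_ne_zero.mpr (Polynomial.X_sub_C_ne_zero _)
    have hCdeg : (C (a α) - X : ℝ[X]).natDegree = 1 := by
      rw [show (C (a α) - X : ℝ[X]) = -(X - C (a α)) from by ring,
        Polynomial.natDegree_neg, Polynomial.natDegree_X_sub_C]
    have hQdeg : ((C (a α) - X) * Pij).natDegree < n := by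
      rw [Polynomial.natDegree_mul hCne hPne, hCdeg, hPdeg]
      omega
    have hext : ∑ β ∈ univ \ {α}, q β ^ 2 * (a α - a β) / ((a β - x i) * (a β - x j))
        = ∑ β, q β ^ 2 * (a α - a β) / ((a β - x i) * (a β - x j)) := by
      refine Finset.sum_subset (Finset.sdiff_subset) fun β _ hβ => ?_
      have : β = α := by
        by_contra hne
        exact hβ (by simp [hne])
      rw [this, sub_self, mul_zero, zero_div]
    have hterm : ∀ β : Fin (n + 1), q β ^ 2 * (a α - a β) / ((a β - x i) * (a β - x j))
        = ((C (a α) - X) * Pij).eval (a β) / ∏ γ ∈ univ \ {β}, (a β - a γ) := by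
      intro β
      rw [hq β, Polynomial.eval_mul, Polynomial.eval_sub, Polynomial.eval_C, Polynomial.eval_X,
        hPeval, Finset.prod_eq_prod_diff_singleton_mul (mem_univ i) (fun k => a β - x k),
        Finset.prod_eq_prod_diff_singleton_mul hji (fun k => a β - x k)]
      field_simp [hax β i, hax β j, hd β]
    rw [hext, Finset.sum_congr rfl fun β _ => hterm β]
    exact lagrange_sum_zero a haInj _ hQdeg
  -- abbreviations for the two inner double sums
  set E : Fin (n + 1) → Fin n → Fin n → ℝ := fun β i j =>
    gi i * ξ i * (gi j * ξ j) * (a β * q β ^ 2 / ((a β - x i) * (a β - x j))) with hE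
  set G : Fin (n + 1) → Fin n → Fin n → ℝ := fun β i j =>
    gi i * ξ i * (gi j * ξ j) *
      (x i * x j / ((a α - x i) * (a α - x j)) *
        (q β ^ 2 * (a α - a β) / ((a β - x i) * (a β - x j)))) with hG
  have step1 : ∀ β : Fin (n + 1), a β * (p β) ^ 2
      = (1 / (4 * B ^ 2)) * ∑ i, ∑ j, E β i j := by
    intro β
    have h1 : a β * (-(q β / (2 * B)) * (∑ i, gi i * ξ i / (a β - x i))) ^ 2
        = (1 / (4 * B ^ 2)) * (a β * q β ^ 2 *
            ((∑ i, gi i * ξ i / (a β - x i)) * (∑ j, gi j * ξ j / (a β - x j)))) := by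
      field_simp
      ring
    rw [hp β, h1]
    congr 1
    rw [Finset.sum_mul_sum, Finset.mul_sum]
    refine Finset.sum_congr rfl fun i _ => ?_
    rw [Finset.mul_sum]
    refine Finset.sum_congr rfl fun j _ => ?_
    simp only [hE]
    field_simp [hax β i, hax β j]
  have step2 : ∀ β ∈ (univ \ {α} : Finset (Fin (n + 1))),
      (a α * p α * q β - a β * p β * q α) ^ 2 / (a α - a β)
        = (q α ^ 2 / (4 * B ^ 2)) * ∑ i, ∑ j, G β i j := by
    intro β hβ
    have hβα : a α - a β ≠ 0 := by
      refine sub_ne_zero.mpr fun h => ?_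
      simp only [Finset.mem_sdiff, Finset.mem_singleton] at hβ
      exact hβ.2 (haInj h).symm
    have e1 : a α * (∑ i, gi i * ξ i / (a α - x i)) - a β * (∑ i, gi i * ξ i / (a β - x i))
        = (a β - a α) * ∑ i, gi i * ξ i * x i / ((a α - x i) * (a β - x i)) := by
      rw [Finset.mul_sum, Finset.mul_sum, Finset.mul_sum, ← Finset.sum_sub_distrib]
      refine Finset.sum_congr rfl fun i _ => ?_
      field_simp [hax α i, hax β i]
      ring
    have e2 : a α * p α * q β - a β * p β * q α
        = -(q α * q β / (2 * B)) *
            ((a β - a α) * ∑ i, gi i * ξ i * x i / ((a α - x i) * (a β - x i))) := by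
      rw [hp α, hp β, ← e1]
      ring
    have e3 : (-(q α * q β / (2 * B)) *
          ((a β - a α) * ∑ i, gi i * ξ i * x i / ((a α - x i) * (a β - x i)))) ^ 2 / (a α - a β)
        = (q α ^ 2 / (4 * B ^ 2)) * (q β ^ 2 * (a α - a β) *
            ((∑ i, gi i * ξ i * x i / ((a α - x i) * (a β - x i))) *
             (∑ j, gi j * ξ j * x j / ((a α - x j) * (a β - x j))))) := by
      field_simp [hβα]
      ring
    rw [e2, e3]
    congr 1
    rw [Finset.sum_mul_sum, Finset.mul_sum]
    refine Finset.sum_congr rfl fun i _ => ?_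
    rw [Finset.mul_sum]
    refine Finset.sum_congr rfl fun j _ => ?_
    simp only [hG]
    field_simp [hax β i, hax β j, hax α i, hax α j]
  -- assemble
  have hdm : dualMoser a α p q
      = (q α ^ 2 / (4 * B ^ 2)) *
          ((∑ i, ∑ j, ∑ β, E β i j) + ∑ i, ∑ j, ∑ β ∈ univ \ {α}, G β i j) := by
    rw [dualMoser]
    rw [Finset.sum_congr rfl fun β _ => step1 β, Finset.sum_congr rfl step2]
    rw [← Finset.mul_sum, ← Finset.mul_sum]
    rw [show (∑ β : Fin (n + 1), ∑ i, ∑ j, E β i j) = ∑ i, ∑ j, ∑ β, E β i j from by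
      rw [Finset.sum_comm]
      exact Finset.sum_congr rfl fun i _ => Finset.sum_comm]
    rw [show (∑ β ∈ univ \ {α}, ∑ i, ∑ j, G β i j) = ∑ i, ∑ j, ∑ β ∈ univ \ {α}, G β i j from by
      rw [Finset.sum_comm]
      exact Finset.sum_congr rfl fun i _ => Finset.sum_comm]
    ring
  have hEsum : ∀ i j : Fin n, (∑ β, E β i j)
      = gi i * ξ i * (gi j * ξ j) * ∑ β, a β * q β ^ 2 / ((a β - x i) * (a β - x j)) := by
    intro i j
    rw [Finset.mul_sum]
  have hGsum : ∀ i j : Fin n, (∑ β ∈ univ \ {α}, G β i j)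
      = gi i * ξ i * (gi j * ξ j) * (x i * x j / ((a α - x i) * (a α - x j)) *
          ∑ β ∈ univ \ {α}, q β ^ 2 * (a α - a β) / ((a β - x i) * (a β - x j))) := by
    intro i j
    rw [Finset.mul_sum, Finset.mul_sum]
  have hdiag : ∀ i : Fin n, (∑ β, E β i i) + (∑ β ∈ univ \ {α}, G β i i)
      = 4 * B * a α * (x i * gi i * ξ i ^ 2 / (a α - x i)) := by
    intro i
    rw [hEsum i i, hGsum i i, mainA i, mainB i]
    have h1 := hgg i
    have h2 := hax α i
    have h3 := hgne i
    rw [hgi i]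
    rw [hgi i] at h1
    field_simp
    ring
  have hoff : ∀ i j : Fin n, j ≠ i → (∑ β, E β i j) + (∑ β ∈ univ \ {α}, G β i j) = 0 := by
    intro i j hji
    rw [hEsum i j, hGsum i j, mainC i j (fun h => hji h.symm), mainD i j (fun h => hji h.symm)]
    ring
  rw [hdm, ← Finset.sum_add_distrib]
  rw [Finset.sum_congr rfl fun i _ => (Finset.sum_add_distrib).symm]
  rw [Finset.sum_congr rfl fun i (_ : i ∈ univ) =>
    Finset.sum_eq_single_of_mem i (mem_univ i) fun j _ hj => hoff i j hj]
  rw [Finset.sum_congr rfl fun i _ => hdiag i, ← Finset.mul_sum]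
  field_simp
end

section
/- Let (p,q) ∈ ℝ^{n+1} × ℝ^{n+1} satisfy the constraints Σ_{α=0}^n q_α² = 1 and Σ_{α=0}^n p_α q_α = 0. Then the dual Moser functions satisfy: (i) Σ_{α=0}^n F_α(p,q) = Σ_{β=0}^n a_β p_β²; (ii) Σ_{α=0}^n F_α(p,q)/a_α = 0; (iii) Σ_{α=0}^n F_α(p,q)/a_α² = −(Σ_{γ=0}^n q_γ²/a_γ)(Σ_{β=0}^n p_β²) = −2H(p,q), where H(p,q) = ½ (Σ_{γ} q_γ²/a_γ)(Σ_{β} p_β²). -/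
open Finset

lemma sum_sdiff_singleton {m : ℕ} (α : Fin m) (f : Fin m → ℝ) :
    ∑ β ∈ univ \ {α}, f β = (∑ β, f β) - f α := by
  rw [Finset.sum_sdiff_eq_sub (Finset.singleton_subset_iff.mpr (Finset.mem_univ α)),
    Finset.sum_singleton]

lemma offdiag_swap {m : ℕ} (f : Fin m → Fin m → ℝ) :
    ∑ α, ∑ β ∈ univ \ {α}, f α β = ∑ α, ∑ β ∈ univ \ {α}, f β α := by
  simp only [sum_sdiff_singleton]
  rw [Finset.sum_sub_distrib, Finset.sum_sub_distrib, Finset.sum_comm]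

lemma pair_eval {m : ℕ} (S E : Fin m → Fin m → ℝ) (c : Fin m → ℝ)
    (hdiag : ∀ α, E α α = 0)
    (hpt : ∀ α β : Fin m, β ≠ α → S α β / c α + S β α / c β = -E α β) :
    2 * (∑ α, (∑ β ∈ univ \ {α}, S α β) / c α) = -(∑ α, ∑ β, E α β) := by
  simp only [Finset.sum_div]
  rw [two_mul]
  nth_rewrite 2 [offdiag_swap (fun α β => S α β / c α)]
  rw [← Finset.sum_add_distrib]
  have key : ∀ α : Fin m,
      ((∑ β ∈ univ \ {α}, S α β / c α) + ∑ β ∈ univ \ {α}, S β α / c β)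
        = -∑ β, E α β := by
    intro α
    rw [← Finset.sum_add_distrib]
    have h2 : ∑ β ∈ univ \ {α}, (S α β / c α + S β α / c β)
        = ∑ β ∈ univ \ {α}, -E α β := by
      refine Finset.sum_congr rfl fun β hβ => ?_
      exact hpt α β (by simpa using (Finset.mem_sdiff.mp hβ).2)
    rw [h2, sum_sdiff_singleton, hdiag]
    simp
  simp only [key]
  simp

lemma sum3 {m : ℕ} (f g u v x y : Fin m → ℝ) :
    ∑ α, ∑ β, (f α * g β + u α * v β + x α * y β)
      = (∑ α, f α) * (∑ β, g β) + (∑ α, u α) * (∑ β, v β)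
        + (∑ α, x α) * (∑ β, y β) := by
  simp only [Finset.sum_add_distrib, ← Finset.mul_sum, ← Finset.sum_mul]

lemma sum6 {m : ℕ} (f g u v x y f' g' u' v' x' y' : Fin m → ℝ) :
    ∑ α, ∑ β, (f α * g β + u α * v β + x α * y β
        + f' α * g' β + u' α * v' β + x' α * y' β)
      = (∑ α, f α) * (∑ β, g β) + (∑ α, u α) * (∑ β, v β)
        + (∑ α, x α) * (∑ β, y β) + (∑ α, f' α) * (∑ β, g' β)
        + (∑ α, u' α) * (∑ β, v' β) + (∑ α, x' α) * (∑ β, y' β) := by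
  simp only [Finset.sum_add_distrib, ← Finset.mul_sum, ← Finset.sum_mul]

/-- on the constraint surface `Σ_α q_α² = 1`, `Σ_α p_α q_α = 0`:
(i) `Σ_α F_α = Σ_β a_β p_β²`; (ii) `Σ_α F_α/a_α = 0`;
(iii) `Σ_α F_α/a_α² = −(Σ_γ q_γ²/a_γ)(Σ_β p_β²) = −2H`. -/
theorem dualMoser_constrained_identities (n : ℕ) (hn : 1 ≤ n)
    (a : Fin (n + 1) → ℝ) (ha0 : 0 < a 0) (hmono : StrictMono a)
    (p q : Fin (n + 1) → ℝ)
    (hq : (∑ α, (q α) ^ 2) = 1) (hpq : (∑ α, p α * q α) = 0) :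
    (∑ α, dualMoser a α p q) = ∑ β, a β * (p β) ^ 2 ∧
    (∑ α, dualMoser a α p q / a α) = 0 ∧
    (∑ α, dualMoser a α p q / (a α) ^ 2)
        = -((∑ γ, (q γ) ^ 2 / a γ) * ∑ β, (p β) ^ 2) ∧
    (∑ α, dualMoser a α p q / (a α) ^ 2)
        = -2 * ((1 / 2) * (∑ γ, (q γ) ^ 2 / a γ) * ∑ β, (p β) ^ 2) := by
  have hapos : ∀ α, 0 < a α := fun α => lt_of_lt_of_le ha0 (hmono.monotone (Fin.zero_le α))
  have hane : ∀ α, a α ≠ 0 := fun α => ne_of_gt (hapos α)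
  have hsub : ∀ α β : Fin (n + 1), β ≠ α → a α - a β ≠ 0 := fun α β h =>
    sub_ne_zero.mpr (hmono.injective.ne (Ne.symm h))
  set S : Fin (n + 1) → Fin (n + 1) → ℝ :=
    fun α β => (a α * p α * q β - a β * p β * q α) ^ 2 / (a α - a β) with hS
  have hdual : ∀ α, dualMoser a α p q
      = (q α) ^ 2 * (∑ β, a β * (p β) ^ 2) + ∑ β ∈ univ \ {α}, S α β := fun α => rfl
  -- Part (i)
  have h1 : (∑ α, dualMoser a α p q) = ∑ β, a β * (p β) ^ 2 := by
    have h := pair_eval S (fun _ _ => 0) (fun _ => 1) (fun _ => rfl) (by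
      intro α β hβα
      simp only [hS, div_one, neg_zero]
      have d1 := hsub α β hβα
      have d2 := hsub β α (Ne.symm hβα)
      field_simp
      ring)
    simp only [Finset.sum_const_zero, neg_zero, div_one] at h
    have hT : ∑ α, ∑ β ∈ univ \ {α}, S α β = 0 := by linarith
    simp only [hdual]
    rw [Finset.sum_add_distrib, ← Finset.sum_mul, hq, one_mul, hT, add_zero]
  -- Part (ii)
  have h2 : (∑ α, dualMoser a α p q / a α) = 0 := by
    have h := pair_eval S
      (fun α β => (a α * p α ^ 2) * (q β ^ 2 / a β) + (q α ^ 2 / a α) * (a β * p β ^ 2)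
        + (-2 * (p α * q α)) * (p β * q β)) a
      (by intro α; have := hane α; field_simp; ring)
      (by
        intro α β hβα
        simp only [hS]
        have d1 := hsub α β hβα
        have d2 := hsub β α (Ne.symm hβα)
        have e1 := hane α
        have e2 := hane β
        field_simp
        ring)
    rw [sum3] at h
    rw [hpq, mul_zero, add_zero] at h
    have hrw : ∀ α, dualMoser a α p q / a α
        = (q α ^ 2 / a α) * (∑ β, a β * (p β) ^ 2) + (∑ β ∈ univ \ {α}, S α β) / a α := by
      intro α
      rw [hdual α, add_div]
      congr 1
      ring
    simp only [hrw]
    rw [Finset.sum_add_distrib, ← Finset.sum_mul]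
    linear_combination (1/2) * h
  -- Part (iii)
  have h3 : (∑ α, dualMoser a α p q / (a α) ^ 2)
      = -((∑ γ, (q γ) ^ 2 / a γ) * ∑ β, (p β) ^ 2) := by
    have h := pair_eval S
      (fun α β => (a α * p α ^ 2) * (q β ^ 2 / a β ^ 2) + (p α ^ 2) * (q β ^ 2 / a β)
        + (q α ^ 2 / a α ^ 2) * (a β * p β ^ 2) + (q α ^ 2 / a α) * (p β ^ 2)
        + (p α * q α) * (-2 * (p β * q β / a β))
        + (-2 * (p α * q α / a α)) * (p β * q β)) (fun α => a α ^ 2)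
      (by intro α; have := hane α; field_simp; ring)
      (by
        intro α β hβα
        simp only [hS]
        have d1 := hsub α β hβα
        have d2 := hsub β α (Ne.symm hβα)
        have e1 := hane α
        have e2 := hane β
        field_simp
        ring)
    rw [sum6] at h
    rw [hpq, mul_zero, zero_mul, add_zero, add_zero] at h
    have hrw : ∀ α, dualMoser a α p q / (a α) ^ 2
        = (q α ^ 2 / a α ^ 2) * (∑ β, a β * (p β) ^ 2)
          + (∑ β ∈ univ \ {α}, S α β) / a α ^ 2 := by
      intro α
      rw [hdual α, add_div]
      congr 1
      ring
    simp only [hrw]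
    rw [Finset.sum_add_distrib, ← Finset.sum_mul]
    linear_combination (1/2) * h
  exact ⟨h1, h2, h3, by rw [h3]; ring⟩
end

section
/- Define the n × n matrices A and B by A^i_k = (1/B(x)) xⁱ gⁱ(x) σ^i_{k−1}(x) and B^i_k = (−1)^i (x^k)^{n−i−1}/(4 V(x^k)), where V(λ) = ∏_{α=0}^n (λ − a_α), B(x) = Σ_{α=0}^n q_α²(x)/a_α with q_α²(x) = ∏_{i}(a_α − xⁱ)/∏_{β≠α}(a_α − a_β), gⁱ(x) = 1/g_i(x) with g_i(x) = −(1/(4B(x))) ∏_{j≠i}(xⁱ − xʲ)/∏_{α}(xⁱ − a_α), and σ^i_m(x) is the elementary symmetric polynomial of degree m in the n−1 variables {xʲ : j ≠ i} (with σ^i_0 = 1). Then B is the inverse matrix of A: Σ_{k=1}^n B^i_k A^k_j = δ^i_j for all i, j ∈ {1,…,n}. -/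
open Finset

/-- Elementary symmetric function of degree `m` of the values of `x` on the
index set `s`. -/
noncomputable def esym {n : ℕ} (s : Finset (Fin n)) (x : Fin n → ℝ) (m : ℕ) : ℝ :=
  ∑ t ∈ s.powersetCard m, ∏ j ∈ t, x j

/-- `q_α²(x) = ∏_i (a_α − xⁱ) / ∏_{β≠α} (a_α − a_β)`. -/
noncomputable def qsq {n : ℕ} (a : Fin (n + 1) → ℝ) (x : Fin n → ℝ)
    (α : Fin (n + 1)) : ℝ :=
  (∏ i, (a α - x i)) / ∏ β ∈ univ \ {α}, (a α - a β)

/-- `B(x) = Σ_α q_α²(x)/a_α`. -/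
noncomputable def Bx {n : ℕ} (a : Fin (n + 1) → ℝ) (x : Fin n → ℝ) : ℝ :=
  ∑ α, qsq a x α / a α

/-- The diagonal metric coefficient
`g_i(x) = −(1/(4B)) ∏_{j≠i}(xⁱ − xʲ)/∏_α(xⁱ − a_α)`. -/
noncomputable def gdown {n : ℕ} (a : Fin (n + 1) → ℝ) (x : Fin n → ℝ)
    (i : Fin n) : ℝ :=
  -(1 / (4 * Bx a x)) * (∏ j ∈ univ \ {i}, (x i - x j)) / ∏ α, (x i - a α)

/-- `A^i_k = (1/B(x)) xⁱ gⁱ(x) σ^i_{k−1}(x)`, with rows/columns indexed by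
`Fin n` (so the `Fin`-index `k` corresponds to the 1-based index `k+1`, and
`σ^i_{k−1}` is the elementary symmetric polynomial of degree `(k+1)−1`, i.e.
of degree the `Fin`-value of `k`, in the variables `{xʲ : j ≠ i}`). -/
noncomputable def Amat {n : ℕ} (a : Fin (n + 1) → ℝ) (x : Fin n → ℝ)
    (i k : Fin n) : ℝ :=
  (1 / Bx a x) * x i * (gdown a x i)⁻¹ * esym (univ \ {i}) x (k : ℕ)

/-- `B^i_k = (−1)^i (x^k)^{n−i−1}/(4V(x^k))` with `V(λ) = ∏_α (λ − a_α)`;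
the `Fin`-index `i` corresponds to the 1-based index `i+1`, and the exponent
`n − i − 1` is taken as an integer power (it may be negative). -/
noncomputable def Bmat {n : ℕ} (a : Fin (n + 1) → ℝ) (x : Fin n → ℝ)
    (i k : Fin n) : ℝ :=
  (-1) ^ ((i : ℕ) + 1) * (x k) ^ ((n : ℤ) - ((i : ℕ) + 1) - 1) /
    (4 * ∏ α, (x k - a α))

/-! ### Auxiliary lemmas -/

open Polynomial in
lemma basis_coeff (n : ℕ) (x : Fin n → ℝ) (k : Fin n) (j : Fin n) :
    (Lagrange.basis univ x k).coeff (n - 1 - (j:ℕ)) =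
      (∏ l ∈ univ \ {k}, (x k - x l))⁻¹ * ((-1)^(j:ℕ) * esym (univ \ {k}) x (j:ℕ)) := by
  classical
  rw [Lagrange.basis]
  have h1 : ∀ l ∈ univ.erase k, Lagrange.basisDivisor (x k) (x l)
      = C ((x k - x l)⁻¹) * (X - C (x l)) := fun l _ => rfl
  rw [Finset.prod_congr rfl h1, Finset.prod_mul_distrib, ← map_prod, Finset.prod_inv_distrib]
  rw [Polynomial.coeff_C_mul]
  have hcard : (univ.erase k).card = n - 1 := by
    rw [Finset.card_erase_of_mem (mem_univ k), card_univ, Fintype.card_fin]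
  have hprod : ∏ l ∈ univ.erase k, (X - C (x l))
      = (((univ.erase k).val.map x).map fun t => (X : ℝ[X]) - C t).prod := by
    rw [Multiset.map_map]; rfl
  have hle : n - 1 - (j:ℕ) ≤ Multiset.card ((univ.erase k).val.map x) := by
    rw [Multiset.card_map]
    simp only [Finset.card_def] at hcard ⊢
    omega
  rw [hprod, Multiset.prod_X_sub_C_coeff _ hle]
  have hcard2 : Multiset.card ((univ.erase k).val.map x) = n - 1 := by
    rw [Multiset.card_map]; exact hcard
  have hj : (n - 1) - (n - 1 - (j:ℕ)) = (j:ℕ) := by have := j.isLt; omega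
  rw [hcard2, hj, Finset.esymm_map_val, Finset.erase_eq]
  rfl

open Polynomial in
lemma lag_key (n : ℕ) (x : Fin n → ℝ) (hinj : Function.Injective x) (i j : Fin n) :
    ∑ k, x k ^ (n - 1 - (i:ℕ)) * esym (univ \ {k}) x (j:ℕ) /
        ∏ l ∈ univ \ {k}, (x k - x l) =
      if i = j then (-1:ℝ)^(j:ℕ) else 0 := by
  classical
  set m := n - 1 - (i:ℕ) with hm
  have hmn : m < n := by have := i.isLt; omega
  have hI : (Polynomial.X ^ m : ℝ[X]) = Lagrange.interpolate univ x fun k => (x k) ^ m := by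
    have h := Lagrange.eq_interpolate (s := (univ : Finset (Fin n))) (v := x) hinj.injOn
      (f := (Polynomial.X ^ m : ℝ[X]))
      (by simpa [Polynomial.degree_X_pow] using by exact_mod_cast hmn)
    simpa using h
  have hc : ((Polynomial.X : ℝ[X]) ^ m).coeff (n - 1 - (j:ℕ))
      = (Lagrange.interpolate univ x fun k => (x k) ^ m).coeff (n - 1 - (j:ℕ)) := by
    rw [← hI]
  rw [Polynomial.coeff_X_pow, Lagrange.interpolate_apply, Polynomial.finset_sum_coeff] at hc
  simp only [Polynomial.coeff_C_mul, basis_coeff] at hc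
  have hc2 : (if n - 1 - (j:ℕ) = m then (1:ℝ) else 0)
      = (-1:ℝ)^(j:ℕ) * ∑ k, x k ^ m * esym (univ \ {k}) x (j:ℕ) /
          ∏ l ∈ univ \ {k}, (x k - x l) := by
    rw [hc, Finset.mul_sum]
    refine Finset.sum_congr rfl fun k _ => ?_
    field_simp
  have hsq : (-1:ℝ)^(j:ℕ) * (-1:ℝ)^(j:ℕ) = 1 := by
    rw [← mul_pow]; norm_num
  have hfin := congrArg (fun t => (-1:ℝ)^(j:ℕ) * t) hc2
  simp only [← mul_assoc, hsq, one_mul] at hfin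
  rw [← hfin]
  by_cases hij : i = j
  · subst hij
    rw [if_pos rfl, if_pos rfl, mul_one]
  · have h1 : ¬ (n - 1 - (j:ℕ) = m) := by
      have hi := i.isLt; have hj := j.isLt
      have : (i:ℕ) ≠ (j:ℕ) := fun h => hij (Fin.ext h)
      omega
    rw [if_neg h1, if_neg hij, mul_zero]

lemma prod_sign_pos {ι : Type*} [DecidableEq ι] (s : Finset ι) (f : ι → ℝ)
    (h : ∀ i ∈ s, f i ≠ 0) :
    0 < (-1:ℝ) ^ #(s.filter fun i => f i < 0) * ∏ i ∈ s, f i := by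
  classical
  induction s using Finset.induction_on with
  | empty => simp
  | @insert a s ha ih =>
    have hfa := h a (mem_insert_self a s)
    have ih' := ih fun i hi => h i (mem_insert_of_mem hi)
    rw [prod_insert ha, filter_insert]
    by_cases hneg : f a < 0
    · rw [if_pos hneg, card_insert_of_notMem (fun hc => ha (mem_filter.1 hc).1)]
      have key : (-1:ℝ) ^ (#(s.filter fun i => f i < 0) + 1) * (f a * ∏ i ∈ s, f i)
          = ((-1:ℝ) ^ #(s.filter fun i => f i < 0) * ∏ i ∈ s, f i) * (-f a) := by ring
      rw [key]
      exact mul_pos ih' (neg_pos.2 hneg)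
    · rw [if_neg hneg]
      have hpos : 0 < f a := lt_of_le_of_ne (not_lt.1 hneg) (Ne.symm hfa)
      have key : (-1:ℝ) ^ #(s.filter fun i => f i < 0) * (f a * ∏ i ∈ s, f i)
          = f a * ((-1:ℝ) ^ #(s.filter fun i => f i < 0) * ∏ i ∈ s, f i) := by ring
      rw [key]
      exact mul_pos hpos ih'

/-- Sign characterization: `a α - x i < 0` iff `α ≤ i` as naturals. -/
lemma sub_ax_neg_iff {n : ℕ} {a : Fin (n + 1) → ℝ} (hmono : StrictMono a)
    {x : Fin n → ℝ} (hx : ∀ i : Fin n, a i.castSucc < x i ∧ x i < a i.succ)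
    (α : Fin (n + 1)) (i : Fin n) :
    a α - x i < 0 ↔ (α:ℕ) ≤ (i:ℕ) := by
  constructor
  · intro h
    by_contra hc
    have h2 : (i:ℕ) + 1 ≤ (α:ℕ) := by omega
    have hle : a i.succ ≤ a α := hmono.monotone (by rw [Fin.le_def]; simpa using h2)
    have := (hx i).2
    linarith
  · intro h
    have hle : a α ≤ a i.castSucc := hmono.monotone (by rw [Fin.le_def]; simpa using h)
    have := (hx i).1
    linarith

lemma sub_ax_ne {n : ℕ} {a : Fin (n + 1) → ℝ} (hmono : StrictMono a)
    {x : Fin n → ℝ} (hx : ∀ i : Fin n, a i.castSucc < x i ∧ x i < a i.succ)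
    (α : Fin (n + 1)) (i : Fin n) :
    a α - x i ≠ 0 := by
  intro h
  rcases le_or_gt ((α:ℕ)) ((i:ℕ)) with h1 | h1
  · have := (sub_ax_neg_iff hmono hx α i).2 h1
    linarith
  · have h2 : (i:ℕ) + 1 ≤ (α:ℕ) := by omega
    have hle : a i.succ ≤ a α := hmono.monotone (by rw [Fin.le_def]; simpa using h2)
    have := (hx i).2
    linarith

lemma Bx_pos {n : ℕ} (a : Fin (n + 1) → ℝ) (ha0 : 0 < a 0) (hmono : StrictMono a)
    (x : Fin n → ℝ)
    (hx : ∀ i : Fin n, a i.castSucc < x i ∧ x i < a i.succ) :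
    0 < Bx a x := by
  classical
  have hlt2 : ∀ (α β : Fin (n+1)), a α - a β < 0 ↔ (α:ℕ) < (β:ℕ) := by
    intro α β
    constructor
    · intro h
      by_contra hc
      have : a β ≤ a α := hmono.monotone (by rw [Fin.le_def]; omega)
      linarith
    · intro h
      have : a α < a β := hmono (by rw [Fin.lt_def]; exact h)
      linarith
  refine Finset.sum_pos (fun α _ => ?_) univ_nonempty
  have hapos : 0 < a α := lt_of_lt_of_le ha0 (hmono.monotone (Fin.zero_le α))
  refine div_pos ?_ hapos
  set c1 := #(univ.filter fun i : Fin n => a α - x i < 0) with hc1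
  set c2 := #((univ \ {α}).filter fun β => a α - a β < 0) with hc2
  have hcc : c1 = c2 := by
    rw [hc1, hc2]
    refine Finset.card_bij (fun i _ => i.succ) ?_ ?_ ?_
    · intro i hi
      rw [mem_filter] at hi
      have hαi : (α:ℕ) ≤ (i:ℕ) := (sub_ax_neg_iff hmono hx α i).1 hi.2
      simp only [mem_filter, Finset.mem_sdiff, Finset.mem_singleton]
      refine ⟨⟨mem_univ _, ?_⟩, ?_⟩
      · intro hc
        have hv : (i.succ : ℕ) = (α:ℕ) := congrArg Fin.val hc
        rw [Fin.val_succ] at hv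
        omega
      · rw [hlt2, Fin.val_succ]
        omega
    · intro p _ q _ h
      exact Fin.succ_injective _ h
    · intro β hβ
      simp only [mem_filter, Finset.mem_sdiff, Finset.mem_singleton] at hβ
      have hβα : (α:ℕ) < (β:ℕ) := (hlt2 α β).1 hβ.2
      have hβ0 : β ≠ 0 := by
        intro h
        rw [h] at hβα
        simp at hβα
      have hβn := β.isLt
      refine ⟨β.pred hβ0, ?_, Fin.succ_pred β hβ0⟩
      rw [mem_filter]
      refine ⟨mem_univ _, ?_⟩
      rw [sub_ax_neg_iff hmono hx α]
      have hv : ((β.pred hβ0 : Fin n) : ℕ) = (β:ℕ) - 1 := rfl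
      omega
  have hN : 0 < (-1:ℝ) ^ c1 * ∏ i, (a α - x i) :=
    prod_sign_pos _ _ fun i _ => sub_ax_ne hmono hx α i
  have hD : 0 < (-1:ℝ) ^ c1 * ∏ β ∈ univ \ {α}, (a α - a β) := by
    rw [hcc]
    refine prod_sign_pos _ _ fun β hβ => ?_
    rw [Finset.mem_sdiff, Finset.mem_singleton] at hβ
    have hαβ : α ≠ β := fun h => hβ.2 h.symm
    exact sub_ne_zero.2 fun h => hαβ (hmono.injective h)
  have hne : ((-1:ℝ) ^ c1) ≠ 0 := pow_ne_zero _ (by norm_num)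
  rw [qsq]
  rw [show (∏ i, (a α - x i)) / ∏ β ∈ univ \ {α}, (a α - a β)
      = ((-1:ℝ) ^ c1 * ∏ i, (a α - x i)) / ((-1:ℝ) ^ c1 * ∏ β ∈ univ \ {α}, (a α - a β))
      from (mul_div_mul_left _ _ hne).symm]
  exact div_pos hN hD

lemma term_alg (B V P xk E : ℝ) (m : ℕ) (i : ℕ)
    (hB : B ≠ 0) (hV : V ≠ 0) (hP : P ≠ 0) (hx : xk ≠ 0) :
    (-1:ℝ)^(i+1) * (xk^m * xk⁻¹) / (4*V) * ((1/B) * xk * (-(4*B*V)/P) * E)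
      = (-1:ℝ)^i * (xk^m * E / P) := by
  field_simp
  ring

/-- the Stäckel matrix `B` is the inverse of `A`:
`Σ_k B^i_k A^k_j = δ^i_j`. -/
theorem staeckel_matrix_inverse (n : ℕ) (hn : 1 ≤ n)
    (a : Fin (n + 1) → ℝ) (ha0 : 0 < a 0) (hmono : StrictMono a)
    (x : Fin n → ℝ)
    (hx : ∀ i : Fin n, a i.castSucc < x i ∧ x i < a i.succ)
    (i j : Fin n) :
    (∑ k, Bmat a x i k * Amat a x k j) = if i = j then (1 : ℝ) else 0 := by
  classical
  have hB : 0 < Bx a x := Bx_pos a ha0 hmono x hx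
  have hBne : Bx a x ≠ 0 := hB.ne'
  have hxpos : ∀ k : Fin n, 0 < x k := fun k =>
    (lt_of_lt_of_le ha0 (hmono.monotone (Fin.zero_le _))).trans (hx k).1
  have hxa : ∀ (k : Fin n) (α : Fin (n+1)), x k - a α ≠ 0 := by
    intro k α h
    exact sub_ax_ne hmono hx α k (by linarith [sub_eq_zero.1 h])
  have hV : ∀ k : Fin n, (∏ α, (x k - a α)) ≠ 0 := fun k =>
    Finset.prod_ne_zero_iff.2 fun α _ => hxa k α
  have hxinj : StrictMono x := by
    intro k l hkl
    have h1 : x k < a k.succ := (hx k).2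
    have h2 : a l.castSucc < x l := (hx l).1
    have hkl' : (k:ℕ) < (l:ℕ) := hkl
    have hle : a k.succ ≤ a l.castSucc :=
      hmono.monotone (by rw [Fin.le_def]; simpa using hkl')
    linarith
  have hP : ∀ k : Fin n, (∏ l ∈ univ \ {k}, (x k - x l)) ≠ 0 := by
    intro k
    refine Finset.prod_ne_zero_iff.2 fun l hl => sub_ne_zero.2 fun h => ?_
    rw [Finset.mem_sdiff, Finset.mem_singleton] at hl
    exact hl.2 (hxinj.injective h).symm
  have hterm : ∀ k, Bmat a x i k * Amat a x k j
      = (-1:ℝ)^(i:ℕ) * (x k ^ (n - 1 - (i:ℕ)) * esym (univ \ {k}) x (j:ℕ) /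
          ∏ l ∈ univ \ {k}, (x k - x l)) := by
    intro k
    have hxk : x k ≠ 0 := (hxpos k).ne'
    have hzp : (x k : ℝ) ^ ((n : ℤ) - ((i : ℕ) + 1) - 1)
        = x k ^ (n - 1 - (i:ℕ)) * (x k)⁻¹ := by
      have he : (n : ℤ) - ((i : ℕ) + 1) - 1 = ((n - 1 - (i:ℕ) : ℕ) : ℤ) - 1 := by
        have := i.isLt; push_cast; omega
      rw [he, zpow_sub_one₀ hxk, zpow_natCast]
    have hg1 : gdown a x k
        = (∏ l ∈ univ \ {k}, (x k - x l)) / -(4 * Bx a x * ∏ α, (x k - a α)) := by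
      rw [gdown]
      field_simp
    have hg : (gdown a x k)⁻¹
        = -(4 * Bx a x * ∏ α, (x k - a α)) / ∏ l ∈ univ \ {k}, (x k - x l) := by
      rw [hg1, inv_div]
    rw [Bmat, Amat, hzp, hg]
    exact term_alg (Bx a x) (∏ α, (x k - a α)) (∏ l ∈ univ \ {k}, (x k - x l)) (x k)
      (esym (univ \ {k}) x (j:ℕ)) (n - 1 - (i:ℕ)) (i:ℕ) hBne (hV k) (hP k) hxk
  rw [Finset.sum_congr rfl (fun k _ => hterm k), ← Finset.mul_sum,
    lag_key n x hxinj.injective i j]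
  by_cases hij : i = j
  · subst hij
    rw [if_pos rfl, if_pos rfl, ← mul_pow]
    norm_num
  · rw [if_neg hij, if_neg hij, mul_zero]
end

section
/- Let a_0,…,a_n be positive reals, B(q) = Σ_{α=0}^n q_α²/a_α, A(v) = Σ_{α=0}^n a_α v_α², and let J(q,v) = A(v)/B(q)² be the Joachimsthal function of the dual metric. Denote by X_2 the geodesic spray of the conformally flat metric ḡ = B(q)^{−1} Σ_α dq_α² on ℝ^{n+1} \ {0}, i.e. X_2 = Σ_α v_α ∂/∂q_α + (1/B) Σ_α (2 v_α Σ_β v_β q_β/a_β − v² q_α/a_α) ∂/∂v_α. Then at every point (q,v) with q ≠ 0 satisfying the tangency constraint Σ_{α=0}^n v_α q_α = 0, one has X_2 J = 0, i.e. Σ_α v_α ∂J/∂q_α + (1/B(q)) Σ_α (2 v_α Σ_β v_β q_β/a_β − v² q_α/a_α) ∂J/∂v_α = 0. -/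
open Finset

/-- Partial derivative with respect to `q α` (the first group of variables)
of a function of `(q, v) ∈ ℝ^m × ℝ^m`. -/
noncomputable def pderiv1 {m : ℕ} (F : (Fin m → ℝ) → (Fin m → ℝ) → ℝ)
    (α : Fin m) (q v : Fin m → ℝ) : ℝ :=
  deriv (fun t => F (Function.update q α t) v) (q α)

/-- Partial derivative with respect to `v α` (the second group of variables)
of a function of `(q, v) ∈ ℝ^m × ℝ^m`. -/
noncomputable def pderiv2 {m : ℕ} (F : (Fin m → ℝ) → (Fin m → ℝ) → ℝ)
    (α : Fin m) (q v : Fin m → ℝ) : ℝ :=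
  deriv (fun t => F q (Function.update v α t)) (v α)

/-- The dual Joachimsthal function `J(q,v) = A(v)/B(q)²` with
`A(v) = Σ_α a_α v_α²` and `B(q) = Σ_α q_α²/a_α`. -/
noncomputable def joachimsthalJ {m : ℕ} (a : Fin m → ℝ) (q v : Fin m → ℝ) : ℝ :=
  (∑ α, a α * (v α) ^ 2) / (∑ α, (q α) ^ 2 / a α) ^ 2

lemma sum_update_sq_div {m : ℕ} (a q : Fin m → ℝ) (α : Fin m) (t : ℝ) :
    ∑ β, (Function.update q α t β) ^ 2 / a β
      = t ^ 2 / a α + ∑ β ∈ Finset.univ.erase α, (q β) ^ 2 / a β := by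
  rw [show (fun β => (Function.update q α t β) ^ 2 / a β)
      = Function.update (fun β => (q β) ^ 2 / a β) α (t ^ 2 / a α) from ?_,
    Finset.sum_update_of_mem (Finset.mem_univ α), Finset.sdiff_singleton_eq_erase]
  funext β
  by_cases h : β = α <;> simp [Function.update_apply, h]

lemma pd1 {m : ℕ} (a : Fin m → ℝ) (ha : ∀ α, 0 < a α) (q v : Fin m → ℝ)
    (α : Fin m) (hB : (∑ β, (q β) ^ 2 / a β) ≠ 0) :
    pderiv1 (joachimsthalJ a) α q v
      = -4 * (∑ β, a β * (v β) ^ 2) * q α / (a α * (∑ β, (q β) ^ 2 / a β) ^ 3) := by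
  set A := ∑ β, a β * (v β) ^ 2 with hA
  set C := ∑ β ∈ Finset.univ.erase α, (q β) ^ 2 / a β with hC
  have hBC : (q α) ^ 2 / a α + C = ∑ β, (q β) ^ 2 / a β := by
    exact Finset.add_sum_erase Finset.univ (fun β => (q β) ^ 2 / a β) (Finset.mem_univ α)
  have hfun : (fun t => joachimsthalJ a (Function.update q α t) v)
      = fun t => A * ((t ^ 2 / a α + C) ^ 2)⁻¹ := by
    funext t
    rw [joachimsthalJ, sum_update_sq_div, div_eq_mul_inv]
  have hg : HasDerivAt (fun t : ℝ => t ^ 2 / a α + C) (2 * q α / a α) (q α) := by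
    simpa using ((hasDerivAt_pow 2 (q α)).div_const (a α)).add_const C
  have hg2 := hg.pow 2
  have hne : ((q α) ^ 2 / a α + C) ^ 2 ≠ 0 := by
    rw [hBC]; exact pow_ne_zero 2 hB
  have hfin := (hg2.inv hne).const_mul A
  rw [pderiv1, hfun, show (fun t => A * ((t ^ 2 / a α + C) ^ 2)⁻¹) = (fun y => A * ((fun t => t ^ 2 / a α + C) ^ 2)⁻¹ y) from rfl, hfin.deriv]
  simp only [pow_one, Nat.cast_ofNat, Pi.pow_apply]
  rw [hBC]
  field_simp
  rw [show (2:ℕ) - 1 = 1 from rfl]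
  ring

lemma sum_update_mul_sq {m : ℕ} (a v : Fin m → ℝ) (α : Fin m) (t : ℝ) :
    ∑ β, a β * (Function.update v α t β) ^ 2
      = a α * t ^ 2 + ∑ β ∈ Finset.univ.erase α, a β * (v β) ^ 2 := by
  rw [show (fun β => a β * (Function.update v α t β) ^ 2)
      = Function.update (fun β => a β * (v β) ^ 2) α (a α * t ^ 2) from ?_,
    Finset.sum_update_of_mem (Finset.mem_univ α), Finset.sdiff_singleton_eq_erase]
  funext β
  by_cases h : β = α <;> simp [Function.update_apply, h]

lemma pd2 {m : ℕ} (a : Fin m → ℝ) (q v : Fin m → ℝ) (α : Fin m) :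
    pderiv2 (joachimsthalJ a) α q v
      = 2 * a α * v α / (∑ β, (q β) ^ 2 / a β) ^ 2 := by
  set D := ∑ β ∈ Finset.univ.erase α, a β * (v β) ^ 2 with hD
  set B := ∑ β, (q β) ^ 2 / a β with hB
  have hfun : (fun t => joachimsthalJ a q (Function.update v α t))
      = fun t => (a α * t ^ 2 + D) / B ^ 2 := by
    funext t
    rw [joachimsthalJ, sum_update_mul_sq]
  have hg : HasDerivAt (fun t : ℝ => (a α * t ^ 2 + D) / B ^ 2)
      (a α * (2 * v α) / B ^ 2) (v α) := by
    simpa using (((hasDerivAt_pow 2 (v α)).const_mul (a α)).add_const D).div_const (B ^ 2)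
  rw [pderiv2, hfun, hg.deriv]
  ring

/-- `X₂ J = 0` at every point `(q,v)` with `q ≠ 0` satisfying
the tangency constraint `Σ_α v_α q_α = 0`, where
`X₂ = Σ_α v_α ∂/∂q_α + (1/B) Σ_α (2 v_α Σ_β v_β q_β/a_β − v² q_α/a_α) ∂/∂v_α`
is the geodesic spray of the conformally flat metric `ḡ = B⁻¹ Σ dq_α²`. -/
theorem dual_joachimsthal_first_integral (n : ℕ) (hn : 1 ≤ n)
    (a : Fin (n + 1) → ℝ) (ha : ∀ α, 0 < a α)
    (q v : Fin (n + 1) → ℝ) (hq : q ≠ 0) (hvq : (∑ α, v α * q α) = 0) :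
    (∑ α, v α * pderiv1 (joachimsthalJ a) α q v)
      + (1 / ∑ β, (q β) ^ 2 / a β) *
          ∑ α, (2 * v α * (∑ β, v β * q β / a β)
            - (∑ β, (v β) ^ 2) * q α / a α) * pderiv2 (joachimsthalJ a) α q v
      = 0 := by
  set A := ∑ β, a β * (v β) ^ 2 with hA
  set B := ∑ β, (q β) ^ 2 / a β with hB
  set S := ∑ β, v β * q β / a β with hS
  set V := ∑ β, (v β) ^ 2 with hV
  have hBpos : 0 < B := by
    obtain ⟨γ, hγ⟩ : ∃ γ, q γ ≠ 0 := by
      by_contra h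
      push_neg at h
      exact hq (funext h)
    refine Finset.sum_pos' (fun β _ => by have := ha β; positivity) ⟨γ, Finset.mem_univ γ, ?_⟩
    have := ha γ
    positivity
  have hBne : B ≠ 0 := hBpos.ne'
  have h1 : (∑ α, v α * pderiv1 (joachimsthalJ a) α q v)
      = (-4 * A / B ^ 3) * S := by
    rw [hS, Finset.mul_sum]
    refine Finset.sum_congr rfl fun α _ => ?_
    rw [pd1 a ha q v α hBne, ← hB, ← hA]
    field_simp
  have h2 : (∑ α, (2 * v α * S - V * q α / a α) * pderiv2 (joachimsthalJ a) α q v)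
      = (4 * S / B ^ 2) * A - (2 * V / B ^ 2) * ∑ α, v α * q α := by
    have key : ∀ α ∈ Finset.univ, (2 * v α * S - V * q α / a α) * pderiv2 (joachimsthalJ a) α q v
        = (4 * S / B ^ 2) * (a α * v α ^ 2) - (2 * V / B ^ 2) * (v α * q α) := by
      intro α _
      rw [pd2 a q v α, ← hB]
      field_simp [(ha α).ne']
      ring
    rw [Finset.sum_congr rfl key, Finset.sum_sub_distrib, ← Finset.mul_sum, ← Finset.mul_sum, ← hA]
  rw [h1, h2, hvq]
  field_simp
  ring
end

section
/- In the exterior algebra Λ(ℝ^{2(n+1)}) with basis e_0,…,e_n, f_0,…,f_n, let c_0,…,c_n and q_0,…,q_n be reals, set ω = Σ_{α=0}^n c_α f_α ∧ e_α and μ = (f_0 ∧ e_0) ∧ (f_1 ∧ e_1) ∧ ⋯ ∧ (f_n ∧ e_n). Then ω^n ∧ (Σ_{α=0}^n q_α f_α) ∧ (Σ_{α=0}^n q_α e_α) = n! ( Σ_{α=0}^n q_α² ∏_{β≠α} c_β ) μ. (When all c_α ≠ 0 this is the first identity of Tabachnikov's lemma: the ratio of this top-degree form to μ equals n! (∏_α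 c_α)(Σ_α q_α²/c_α).) -/
open Finset

/-- The basis vector `e_α` of the exterior algebra of `ℝ^{2(n+1)}`
(realized as `(Fin (n+1) → ℝ) × (Fin (n+1) → ℝ)`). -/
noncomputable def eVec (n : ℕ) (α : Fin (n + 1)) :
    ExteriorAlgebra ℝ ((Fin (n + 1) → ℝ) × (Fin (n + 1) → ℝ)) :=
  ExteriorAlgebra.ι ℝ (Pi.single α 1, 0)

/-- The basis vector `f_α` of the exterior algebra of `ℝ^{2(n+1)}`. -/
noncomputable def fVec (n : ℕ) (α : Fin (n + 1)) :
    ExteriorAlgebra ℝ ((Fin (n + 1) → ℝ) × (Fin (n + 1) → ℝ)) :=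
  ExteriorAlgebra.ι ℝ (0, Pi.single α 1)

section Aux

variable {A : Type*} [Ring A]

/-- If `x` squares to zero and commutes with `y`, binomial expansion collapses. -/
lemma sq_zero_commute_add_pow {x y : A} (h : Commute x y) (hx : x * x = 0) :
    ∀ k : ℕ, (x + y) ^ (k + 1) = y ^ (k + 1) + (k + 1) • (x * y ^ k) := by
  intro k
  induction k with
  | zero => simp [add_comm]
  | succ k ih =>
    have hyx : y ^ (k + 1) * x = x * y ^ (k + 1) := (h.symm.pow_left (k + 1)).eq
    have hxyx : x * y ^ k * x = 0 := by
      rw [mul_assoc, (h.pow_right k).symm.eq, ← mul_assoc, hx, zero_mul]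
    calc (x + y) ^ (k + 1 + 1) = (x + y) ^ (k + 1) * (x + y) := by rw [pow_succ]
      _ = (y ^ (k + 1) + (k + 1) • (x * y ^ k)) * (x + y) := by rw [ih]
      _ = y ^ (k + 1) * x + y ^ (k + 1) * y + ((k + 1) • (x * y ^ k * x)
            + (k + 1) • (x * y ^ k * y)) := by
          rw [add_mul, mul_add, mul_add, smul_mul_assoc, smul_mul_assoc]
      _ = x * y ^ (k + 1) + y ^ (k + 1 + 1) + (k + 1) • (x * y ^ (k + 1)) := by
          rw [hyx, hxyx, smul_zero, zero_add, ← pow_succ, mul_assoc, ← pow_succ]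
      _ = y ^ (k + 1 + 1) + (k + 1 + 1) • (x * y ^ (k + 1)) := by
          rw [succ_nsmul (x * y ^ (k + 1)) (k + 1)]
          abel

/-- Power of a sum of pairwise commuting square-zero elements. -/
lemma pow_sum_sq_zero {ι : Type*} [DecidableEq ι] (x : ι → A)
    (hcomm : ∀ a b, Commute (x a) (x b)) (hsq : ∀ a, x a * x a = 0)
    (s : Finset ι) : ∀ k : ℕ,
    (∑ a ∈ s, x a) ^ k
      = k.factorial • ∑ t ∈ s.powersetCard k,
          t.noncommProd x (fun a _ b _ _ => hcomm a b) := by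
  induction s using Finset.induction_on with
  | empty =>
    intro k
    cases k with
    | zero => simp; rfl
    | succ k =>
      have h : Finset.powersetCard (k + 1) (∅ : Finset ι) = ∅ :=
        Finset.powersetCard_eq_empty.mpr (by simp)
      simp [h, zero_pow]
  | @insert a s ha ih =>
    intro k
    have hsum : ∑ b ∈ insert a s, x b = x a + ∑ b ∈ s, x b := Finset.sum_insert ha
    cases k with
    | zero => simp; rfl
    | succ m =>
      have hc : Commute (x a) (∑ b ∈ s, x b) := Commute.sum_right _ _ _ fun b _ => hcomm a b
      rw [hsum, sq_zero_commute_add_pow hc (hsq a) m, ih (m + 1), ih m,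
        Finset.powersetCard_succ_insert ha m]
      have hdisj : Disjoint (s.powersetCard (m + 1)) ((s.powersetCard m).image (insert a)) := by
        rw [Finset.disjoint_left]
        intro t ht ht'
        obtain ⟨u, hu, rfl⟩ := Finset.mem_image.mp ht'
        exact ha ((Finset.mem_powersetCard.mp ht).1 (Finset.mem_insert_self a u))
      rw [Finset.sum_union hdisj]
      have himg : ∑ t ∈ (s.powersetCard m).image (insert a),
            t.noncommProd x (fun a _ b _ _ => hcomm a b)
          = ∑ t ∈ s.powersetCard m, x a * t.noncommProd x (fun a _ b _ _ => hcomm a b) := by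
        rw [Finset.sum_image]
        · refine Finset.sum_congr rfl fun t ht => ?_
          have hat : a ∉ t := fun hat => ha ((Finset.mem_powersetCard.mp ht).1 hat)
          erw [Finset.noncommProd_insert_of_notMem _ _ _ _ hat]
        · intro u hu v hv huv
          have hau : a ∉ u := fun h => ha ((Finset.mem_powersetCard.mp hu).1 h)
          have hav : a ∉ v := fun h => ha ((Finset.mem_powersetCard.mp hv).1 h)
          rw [← Finset.erase_insert hau, ← Finset.erase_insert hav, huv]
      rw [himg, smul_add, ← Finset.mul_sum]
      congr 1
      rw [mul_smul_comm, smul_smul, ← Nat.factorial_succ]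

lemma noncommProd_smul_real [Algebra ℝ A] {ι : Type*} (c : ι → ℝ) (w : ι → A)
    (hcomm : ∀ a b, Commute (w a) (w b)) (t : Finset ι) :
    (t.noncommProd (fun a => c a • w a)
        (fun a _ b _ _ => ((hcomm a b).smul_left (c a)).smul_right (c b)))
      = (∏ a ∈ t, c a) • t.noncommProd w (fun a _ b _ _ => hcomm a b) := by
  induction t using Finset.cons_induction with
  | empty => simp; rfl
  | cons a t hat ih =>
    erw [Finset.noncommProd_cons, Finset.noncommProd_cons, ih, Finset.prod_cons,
      smul_mul_assoc, mul_smul_comm, smul_smul]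

lemma Multiset.noncommProd_congr' {α : Type*} [Monoid α] {s t : Multiset α} (h : s = t) (comm) :
    s.noncommProd comm = t.noncommProd (h ▸ comm) := by subst h; rfl

lemma noncommProd_univ_fin {B : Type*} [Monoid B] {m : ℕ} (w : Fin m → B) (comm) :
    (Finset.univ : Finset (Fin m)).noncommProd w comm
      = ((List.finRange m).map w).prod := by
  rw [Finset.noncommProd]
  have h : Multiset.map w (Finset.univ : Finset (Fin m)).val
      = (((List.finRange m).map w : List B) : Multiset B) :=
    (Fin.univ_val_map w).trans (by rw [List.ofFn_eq_map])
  exact (Multiset.noncommProd_congr' h _).trans (Multiset.noncommProd_coe _ _)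

end Aux


section Tab

open ExteriorAlgebra

variable {n : ℕ}

/-- Shorthand for the degree-2 element `f_γ ∧ e_γ`. -/
noncomputable def wVec (n : ℕ) (γ : Fin (n + 1)) :
    ExteriorAlgebra ℝ ((Fin (n + 1) → ℝ) × (Fin (n + 1) → ℝ)) :=
  fVec n γ * eVec n γ

lemma wVec_def (γ : Fin (n + 1)) : fVec n γ * eVec n γ = wVec n γ := rfl

lemma ι_anticomm (u v : (Fin (n + 1) → ℝ) × (Fin (n + 1) → ℝ)) :
    ι ℝ v * ι ℝ u = -(ι ℝ u * ι ℝ v) :=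
  eq_neg_of_add_eq_zero_left (ι_add_mul_swap v u)

lemma ι_comm_pair (v u u' : (Fin (n + 1) → ℝ) × (Fin (n + 1) → ℝ)) :
    Commute (ι ℝ v) (ι ℝ u * ι ℝ u') := by
  show ι ℝ v * (ι ℝ u * ι ℝ u') = ι ℝ u * ι ℝ u' * ι ℝ v
  calc ι ℝ v * (ι ℝ u * ι ℝ u') = (ι ℝ v * ι ℝ u) * ι ℝ u' := (mul_assoc _ _ _).symm
    _ = -(ι ℝ u * ι ℝ v) * ι ℝ u' := by rw [ι_anticomm]
    _ = -(ι ℝ u * (ι ℝ v * ι ℝ u')) := by rw [neg_mul, mul_assoc]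
    _ = -(ι ℝ u * -(ι ℝ u' * ι ℝ v)) := by rw [ι_anticomm]
    _ = ι ℝ u * ι ℝ u' * ι ℝ v := by rw [mul_neg, neg_neg, mul_assoc]

lemma ι_comm_wVec (v : (Fin (n + 1) → ℝ) × (Fin (n + 1) → ℝ)) (γ : Fin (n + 1)) :
    Commute (ι ℝ v) (wVec n γ) := ι_comm_pair v _ _

lemma fVec_comm_wVec (α γ : Fin (n + 1)) : Commute (fVec n α) (wVec n γ) := ι_comm_wVec _ γ

lemma eVec_comm_wVec (α γ : Fin (n + 1)) : Commute (eVec n α) (wVec n γ) := ι_comm_wVec _ γ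

lemma wVec_comm (α β : Fin (n + 1)) : Commute (wVec n α) (wVec n β) :=
  Commute.mul_left (fVec_comm_wVec α β) (eVec_comm_wVec α β)

lemma eVec_sq (α : Fin (n + 1)) : eVec n α * eVec n α = 0 := ι_sq_zero _

lemma fVec_sq (α : Fin (n + 1)) : fVec n α * fVec n α = 0 := ι_sq_zero _

lemma wVec_mul_fVec (α : Fin (n + 1)) : wVec n α * fVec n α = 0 := by
  show fVec n α * eVec n α * fVec n α = 0
  rw [mul_assoc, show eVec n α * fVec n α = -(fVec n α * eVec n α) from ι_anticomm _ _,
    mul_neg, ← mul_assoc, fVec_sq, zero_mul, neg_zero]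

lemma wVec_mul_eVec (α : Fin (n + 1)) : wVec n α * eVec n α = 0 := by
  show fVec n α * eVec n α * eVec n α = 0
  rw [mul_assoc, eVec_sq, mul_zero]

lemma wVec_sq (α : Fin (n + 1)) : wVec n α * wVec n α = 0 := by
  show wVec n α * (fVec n α * eVec n α) = 0
  rw [← mul_assoc, wVec_mul_fVec, zero_mul]

lemma noncommProd_wVec_mul_fVec {t : Finset (Fin (n + 1))} {α : Fin (n + 1)} (hα : α ∈ t) :
    t.noncommProd (wVec n) (fun a _ b _ _ => wVec_comm a b) * fVec n α = 0 := by
  rw [← Finset.noncommProd_erase_mul t hα (wVec n) (fun a _ b _ _ => wVec_comm a b),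
    mul_assoc, wVec_mul_fVec, mul_zero]

lemma noncommProd_wVec_mul_eVec {t : Finset (Fin (n + 1))} {α : Fin (n + 1)} (hα : α ∈ t) :
    t.noncommProd (wVec n) (fun a _ b _ _ => wVec_comm a b) * eVec n α = 0 := by
  rw [← Finset.noncommProd_erase_mul t hα (wVec n) (fun a _ b _ _ => wVec_comm a b),
    mul_assoc, wVec_mul_eVec, mul_zero]

lemma fVec_comm_noncommProd (α : Fin (n + 1)) (t : Finset (Fin (n + 1))) :
    Commute (fVec n α) (t.noncommProd (wVec n) (fun a _ b _ _ => wVec_comm a b)) :=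
  Finset.noncommProd_commute _ _ _ _ (fun γ _ => fVec_comm_wVec α γ)

lemma wVec_comm_noncommProd (α : Fin (n + 1)) (t : Finset (Fin (n + 1))) :
    Commute (wVec n α) (t.noncommProd (wVec n) (fun a _ b _ _ => wVec_comm a b)) :=
  Finset.noncommProd_commute _ _ _ _ (fun γ _ => wVec_comm α γ)

lemma ι_comm_noncommProd (v : (Fin (n + 1) → ℝ) × (Fin (n + 1) → ℝ))
    (t : Finset (Fin (n + 1))) :
    Commute (ι ℝ v) (t.noncommProd (wVec n) (fun a _ b _ _ => wVec_comm a b)) :=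
  Finset.noncommProd_commute _ _ _ _ (fun γ _ => ι_comm_wVec v γ)

end Tab

set_option maxHeartbeats 1000000 in
/-- first identity of Tabachnikov's lemma: with
`ω = Σ_α c_α f_α ∧ e_α` and `μ = (f_0 ∧ e_0) ∧ ⋯ ∧ (f_n ∧ e_n)`,
`ω^n ∧ (Σ_α q_α f_α) ∧ (Σ_α q_α e_α) = n! (Σ_α q_α² ∏_{β≠α} c_β) μ`. -/
theorem tabachnikov_first_identity (n : ℕ) (hn : 1 ≤ n)
    (c q : Fin (n + 1) → ℝ) :
    (∑ α, c α • (fVec n α * eVec n α)) ^ n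
        * (∑ α, q α • fVec n α) * (∑ α, q α • eVec n α)
      = ((n.factorial : ℝ) * ∑ α, (q α) ^ 2 * ∏ β ∈ univ \ {α}, c β) •
          ((List.finRange (n + 1)).map (fun γ => fVec n γ * eVec n γ)).prod := by
  classical
  simp only [wVec_def]
  have hcw : ∀ a b : Fin (n + 1), Commute (c a • wVec n a) (c b • wVec n b) :=
    fun a b => ((wVec_comm a b).smul_left (c a)).smul_right (c b)
  have hsqc : ∀ a, (c a • wVec n a) * (c a • wVec n a) = 0 := fun a => by
    rw [smul_mul_assoc, mul_smul_comm, wVec_sq, smul_zero, smul_zero]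
  rw [pow_sum_sq_zero (fun a => c a • wVec n a) hcw hsqc univ n]
  have hps : (univ : Finset (Fin (n + 1))).powersetCard n
      = univ.image (fun γ : Fin (n + 1) => univ.erase γ) := by
    ext t
    simp only [Finset.mem_powersetCard_univ, Finset.mem_image, Finset.mem_univ, true_and]
    constructor
    · intro ht
      have hc1 : tᶜ.card = 1 := by
        rw [Finset.card_compl, ht]
        simp
      obtain ⟨γ, hγ⟩ := Finset.card_eq_one.mp hc1
      refine ⟨γ, ?_⟩
      rw [← compl_compl t, hγ, ← Finset.sdiff_singleton_eq_erase,
        ← Finset.compl_eq_univ_sdiff]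
    · rintro ⟨γ, rfl⟩
      rw [Finset.card_erase_of_mem (mem_univ γ), Finset.card_univ]
      simp
  have hinj : ∀ a ∈ (univ : Finset (Fin (n + 1))), ∀ b ∈ univ,
      univ.erase a = univ.erase b → a = b := by
    intro a _ b _ h
    by_contra hne
    exact Finset.notMem_erase a univ (h ▸ Finset.mem_erase.mpr ⟨hne, mem_univ a⟩)
  rw [hps, Finset.sum_image hinj]
  simp only [noncommProd_smul_real c (wVec n) wVec_comm]
  rw [smul_mul_assoc, smul_mul_assoc, Finset.sum_mul, Finset.sum_mul]
  have key : ∀ γ : Fin (n + 1),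
      ((∏ a ∈ univ.erase γ, c a) •
          (univ.erase γ).noncommProd (wVec n) (fun a _ b _ _ => wVec_comm a b))
        * (∑ α, q α • fVec n α) * (∑ α, q α • eVec n α)
      = ((q γ) ^ 2 * ∏ β ∈ univ \ {γ}, c β) • ((List.finRange (n + 1)).map (wVec n)).prod := by
    intro γ
    set P := (univ.erase γ).noncommProd (wVec n) (fun a _ b _ _ => wVec_comm a b) with hP
    have h1 : P * (∑ α, q α • fVec n α) = q γ • (P * fVec n γ) := by
      rw [Finset.mul_sum, Finset.sum_eq_single γ]
      · rw [mul_smul_comm]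
      · intro β _ hβ
        rw [mul_smul_comm,
          noncommProd_wVec_mul_fVec (Finset.mem_erase.mpr ⟨hβ, mem_univ β⟩), smul_zero]
      · intro h; exact absurd (mem_univ γ) h
    have h2 : ∀ β, β ≠ γ → P * fVec n γ * eVec n β = 0 := by
      intro β hβ
      rw [← (fVec_comm_noncommProd γ (univ.erase γ)).eq, mul_assoc,
        noncommProd_wVec_mul_eVec (Finset.mem_erase.mpr ⟨hβ, mem_univ β⟩), mul_zero]
    have h3 : P * fVec n γ * eVec n γ = ((List.finRange (n + 1)).map (wVec n)).prod := by
      rw [mul_assoc, wVec_def, ← (wVec_comm_noncommProd γ (univ.erase γ)).eq,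
        Finset.mul_noncommProd_erase univ (mem_univ γ) (wVec n)
          (fun a _ b _ _ => wVec_comm a b)]
      exact noncommProd_univ_fin _ _
    have h4 : (P * fVec n γ) * (∑ α, q α • eVec n α)
        = q γ • (P * fVec n γ * eVec n γ) := by
      rw [Finset.mul_sum, Finset.sum_eq_single γ]
      · rw [mul_smul_comm]
      · intro β _ hβ
        rw [mul_smul_comm, h2 β hβ, smul_zero]
      · intro h; exact absurd (mem_univ γ) h
    rw [smul_mul_assoc, smul_mul_assoc, h1, smul_mul_assoc, h4, h3, smul_smul, smul_smul,
      Finset.sdiff_singleton_eq_erase]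
    congr 1
    rw [sq]
    ring
  rw [Finset.sum_congr rfl (fun γ _ => key γ), ← Finset.sum_smul, mul_smul,
    Nat.cast_smul_eq_nsmul]
end

section
/- In the exterior algebra Λ(ℝ^{2(n+1)}) with basis e_0,…,e_n, f_0,…,f_n, let c_0,…,c_n, v_0,…,v_n, q_0,…,q_n be reals, set ω = Σ_{α=0}^n c_α f_α ∧ e_α and μ = (f_0 ∧ e_0) ∧ ⋯ ∧ (f_n ∧ e_n). Then ω^{n−1} ∧ (Σ_α v_α f_α) ∧ (Σ_α v_α e_α) ∧ (Σ_α q_α f_α) ∧ (Σ_α q_α e_α) = (n−1)! ( Σ_{0 ≤ α < β ≤ n} (v_α q_β − v_β q_α)² ∏_{γ ≠ α,β} c_γ ) μ. (When all c_α ≠ 0 this is the second identity of Tabachnikov's lemma, with ratio (n−1)! (∏_γ c_γ) Σ_{α<β} (v_α q_β − v_β q_α)²/(c_α c_β).) -/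
open Finset

set_option maxHeartbeats 1000000
set_option synthInstance.maxHeartbeats 400000

namespace TabAux

/-! ### Generic combinatorial lemmas -/

variable {ι : Type*} [DecidableEq ι]

lemma double_count {M : Type*} [AddCommMonoid M] (u : Finset ι) (m : ℕ) (g : Finset ι → M) :
    ∑ S ∈ u.powersetCard m, ∑ j ∈ u \ S, g (insert j S)
      = (m + 1) • ∑ T ∈ u.powersetCard (m + 1), g T := by
  have hR : (m + 1) • ∑ T ∈ u.powersetCard (m + 1), g T
      = ∑ T ∈ u.powersetCard (m + 1), ∑ _j ∈ T, g T := by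
    rw [smul_sum]
    refine sum_congr rfl fun T hT => ?_
    rw [sum_const, (mem_powersetCard.1 hT).2]
  rw [hR, sum_sigma', sum_sigma']
  refine sum_bij' (fun p _ => ⟨insert p.2 p.1, p.2⟩) (fun p _ => ⟨p.1.erase p.2, p.2⟩)
    ?_ ?_ ?_ ?_ ?_
  · rintro ⟨S, j⟩ hp
    simp only [mem_sigma, mem_powersetCard, mem_sdiff] at hp ⊢
    obtain ⟨⟨hSu, hCard⟩, hju, hjS⟩ := hp
    exact ⟨⟨insert_subset hju hSu, by rw [card_insert_of_notMem hjS, hCard]⟩,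
      mem_insert_self _ _⟩
  · rintro ⟨T, j⟩ hp
    simp only [mem_sigma, mem_powersetCard, mem_sdiff] at hp ⊢
    obtain ⟨⟨hTu, hCard⟩, hjT⟩ := hp
    refine ⟨⟨(erase_subset _ _).trans hTu, ?_⟩, hTu hjT, notMem_erase _ _⟩
    rw [card_erase_of_mem hjT, hCard]; rfl
  · rintro ⟨S, j⟩ hp
    simp only [mem_sigma, mem_powersetCard, mem_sdiff] at hp
    simp [erase_insert hp.2.2]
  · rintro ⟨T, j⟩ hp
    simp only [mem_sigma, mem_powersetCard] at hp
    simp [insert_erase hp.2]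
  · rintro ⟨S, j⟩ _; rfl

lemma sq_zero_sum_pow [Fintype ι] {R : Type*} [CommRing R] (x : ι → R)
    (hx : ∀ i, x i * x i = 0) (m : ℕ) :
    (∑ i, x i) ^ m
      = m.factorial • ∑ S ∈ (univ : Finset ι).powersetCard m, ∏ i ∈ S, x i := by
  induction m with
  | zero => simp
  | succ m ih =>
    rw [pow_succ, ih, smul_mul_assoc, sum_mul]
    have key : ∀ S ∈ (univ : Finset ι).powersetCard m,
        (∏ i ∈ S, x i) * ∑ i, x i = ∑ j ∈ univ \ S, (∏ i ∈ insert j S, x i) := by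
      intro S hS
      rw [mul_sum]
      rw [← sum_sdiff (subset_univ S)]
      have h0 : ∑ j ∈ S, (∏ i ∈ S, x i) * x j = 0 := by
        refine sum_eq_zero fun j hj => ?_
        rw [← mul_prod_erase S x hj]
        rw [mul_comm (x j), mul_assoc, hx j, mul_zero]
      rw [h0, add_zero]
      refine sum_congr rfl fun j hj => ?_
      rw [prod_insert (mem_sdiff.1 hj).2, mul_comm]
    rw [sum_congr rfl key, double_count univ m (fun S => ∏ i ∈ S, x i), smul_smul,
      Nat.factorial_succ, Nat.mul_comm]

lemma prod_smul_out {R B : Type*} [CommRing R] [CommRing B] [Algebra R B]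
    (s : Finset ι) (c : ι → R) (f : ι → B) :
    ∏ i ∈ s, (c i • f i) = (∏ i ∈ s, c i) • ∏ i ∈ s, f i := by
  simp only [Algebra.smul_def]
  rw [prod_mul_distrib, map_prod]

/-! ### Exterior algebra vector lemmas -/

section EA
variable {R : Type*} {M : Type*} [CommRing R] [AddCommGroup M] [Module R M]

local notation "ιv" => ExteriorAlgebra.ι R (M := M)

lemma ea_swap (x y : M) : ιv x * ιv y = -(ιv y * ιv x) :=
  eq_neg_of_add_eq_zero_left (ExteriorAlgebra.ι_add_mul_swap x y)

lemma ea_pair_comm_vec (x y z : M) : Commute (ιv x * ιv y) (ιv z) := by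
  unfold Commute SemiconjBy
  rw [mul_assoc, ea_swap y z, mul_neg, ← mul_assoc, ea_swap x z, neg_mul, neg_neg, mul_assoc]

lemma ea_pair_comm (x y z t : M) : Commute (ιv x * ιv y) (ιv z * ιv t) :=
  ((ea_pair_comm_vec x y z).mul_right (ea_pair_comm_vec x y t))

lemma ea_pair_mul_left (x y : M) : (ιv x * ιv y) * ιv x = 0 := by
  rw [mul_assoc, ea_swap y x, mul_neg, ← mul_assoc, ExteriorAlgebra.ι_sq_zero, zero_mul, neg_zero]

lemma ea_pair_mul_right (x y : M) : (ιv x * ιv y) * ιv y = 0 := by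
  rw [mul_assoc, ExteriorAlgebra.ι_sq_zero, mul_zero]

lemma ea_pair_sq (x y : M) : (ιv x * ιv y) * (ιv x * ιv y) = 0 := by
  rw [← mul_assoc, ea_pair_mul_left, zero_mul]

lemma ea_kill_f (x y z : M) : ιv x * (ιv y * (ιv x * ιv z)) = 0 := by
  rw [← mul_assoc, ← mul_assoc, ea_pair_mul_left, zero_mul]

lemma ea_kill_e (x y z : M) : ιv x * (ιv y * (ιv z * ιv y)) = 0 := by
  rw [← mul_assoc (ιv y), ea_pair_mul_left, mul_zero]

/-- the sign of swapping the 1st and 3rd vectors in a 4-fold product -/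
lemma ea_cross (x y z t : M) :
    ιv x * (ιv z * (ιv y * ιv t)) = -(ιv y * (ιv z * (ιv x * ιv t))) := by
  simp only [← mul_assoc]
  rw [mul_assoc (ιv x) (ιv z) (ιv y), ea_swap z y, mul_neg, neg_mul,
    ← (ea_pair_comm_vec y z x).eq]

/-! ### Killer lemmas in a ring -/

end EA

section Ring
variable {A : Type*} [Ring A] {M x y z t : A}

lemma killer1 (h : M * x = 0) (Z : A) : M * (x * Z) = 0 := by
  rw [← mul_assoc, h, zero_mul]

lemma killer2 (hc : M * x = x * M) (h : M * y = 0) : M * (x * y) = 0 := by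
  rw [← mul_assoc, hc, mul_assoc, h, mul_zero]

end Ring

end TabAux

namespace TabAux

variable (n : ℕ)

local notation "AA" => ExteriorAlgebra ℝ ((Fin (n + 1) → ℝ) × (Fin (n + 1) → ℝ))
local notation "ιv" => ExteriorAlgebra.ι ℝ (M := (Fin (n + 1) → ℝ) × (Fin (n + 1) → ℝ))

/-- `ω_i = f_i ∧ e_i`. -/
noncomputable def ωp (i : Fin (n + 1)) : AA := fVec n i * eVec n i

lemma fVec_def (i : Fin (n + 1)) : fVec n i = ιv (0, Pi.single i 1) := rfl
lemma eVec_def (i : Fin (n + 1)) : eVec n i = ιv (Pi.single i 1, 0) := rfl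

lemma ωp_comm (i j : Fin (n + 1)) : ωp n i * ωp n j = ωp n j * ωp n i :=
  (ea_pair_comm _ _ _ _).eq

lemma ωp_sq (i : Fin (n + 1)) : ωp n i * ωp n i = 0 := ea_pair_sq _ _

lemma ωp_mul_f (i : Fin (n + 1)) : ωp n i * fVec n i = 0 := ea_pair_mul_left _ _

lemma ωp_mul_e (i : Fin (n + 1)) : ωp n i * eVec n i = 0 := ea_pair_mul_right _ _

/-- The subalgebra generated by the `ω_i`; it is commutative. -/
noncomputable def tabB : Subalgebra ℝ AA := Algebra.adjoin ℝ (Set.range (ωp n))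

noncomputable instance : CommRing (tabB n) :=
  { (inferInstance : Ring (tabB n)) with
    mul_comm := (Algebra.adjoinCommRingOfComm ℝ
      (by rintro a ⟨i, rfl⟩ b ⟨j, rfl⟩; exact ωp_comm n i j)).mul_comm }

/-- `ω_i` as an element of the subalgebra. -/
noncomputable def tabW (i : Fin (n + 1)) : tabB n :=
  ⟨ωp n i, Algebra.subset_adjoin ⟨i, rfl⟩⟩

lemma tabW_sq (i : Fin (n + 1)) : tabW n i * tabW n i = 0 := by
  apply Subtype.ext
  show ωp n i * ωp n i = 0
  exact ωp_sq n i

lemma tabB_val_mul (x y : tabB n) :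
    ((tabB n).val (x * y) : AA) = (tabB n).val x * (tabB n).val y := rfl

lemma tabB_comm_mem (y : AA) (hy : y ∈ tabB n) (z : (Fin (n + 1) → ℝ) × (Fin (n + 1) → ℝ)) :
    y * ιv z = ιv z * y := by
  refine Algebra.adjoin_induction (p := fun y _ => y * ιv z = ιv z * y)
    (fun y hy => ?_) (fun r => ?_) (fun a b _ _ ha hb => ?_)
    (fun a b _ _ ha hb => ?_) hy
  · obtain ⟨i, rfl⟩ := hy
    exact (ea_pair_comm_vec _ _ _).eq
  · exact Algebra.commutes r _
  · rw [add_mul, mul_add, ha, hb]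
  · rw [mul_assoc, hb, ← mul_assoc, ha, mul_assoc]

lemma tabB_comm_vec (x : tabB n) (z : (Fin (n + 1) → ℝ) × (Fin (n + 1) → ℝ)) :
    ((tabB n).val x : AA) * ιv z = ιv z * ((tabB n).val x : AA) :=
  tabB_comm_mem n _ x.2 z

lemma tabB_comm_f (x : tabB n) (i : Fin (n + 1)) :
    ((tabB n).val x : AA) * fVec n i = fVec n i * ((tabB n).val x : AA) := tabB_comm_vec n x _

lemma tabB_comm_e (x : tabB n) (i : Fin (n + 1)) :
    ((tabB n).val x : AA) * eVec n i = eVec n i * ((tabB n).val x : AA) := tabB_comm_vec n x _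

/-- The key vanishing: the product of the `ω`'s over `S` kills any vector with index in `S`. -/
lemma prodW_mul_f {S : Finset (Fin (n + 1))} {a : Fin (n + 1)} (ha : a ∈ S) :
    ((tabB n).val (∏ i ∈ S, tabW n i) : AA) * fVec n a = 0 := by
  rw [← Finset.mul_prod_erase S (tabW n) ha, tabB_val_mul, mul_assoc,
    tabB_comm_f n _ a, ← mul_assoc]
  show ωp n a * fVec n a * _ = 0
  rw [ωp_mul_f, zero_mul]

lemma prodW_mul_e {S : Finset (Fin (n + 1))} {a : Fin (n + 1)} (ha : a ∈ S) :
    ((tabB n).val (∏ i ∈ S, tabW n i) : AA) * eVec n a = 0 := by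
  rw [← Finset.mul_prod_erase S (tabW n) ha, tabB_val_mul, mul_assoc,
    tabB_comm_e n _ a, ← mul_assoc]
  show ωp n a * eVec n a * _ = 0
  rw [ωp_mul_e, zero_mul]


lemma pair_eq_pair {γ : Type*} [LinearOrder γ] [DecidableEq γ] {a b x y : γ}
    (hab : a < b) (hxy : x < y) (h : ({a, b} : Finset γ) = {x, y}) : a = x ∧ b = y := by
  have hmem := Finset.ext_iff.1 h
  have ha : a = x ∨ a = y := by simpa using (hmem a).1 (by simp)
  have hb : b = x ∨ b = y := by simpa using (hmem b).1 (by simp)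
  rcases ha with ha | ha <;> rcases hb with hb | hb
  · exact absurd (ha ▸ hb ▸ hab) (lt_irrefl _)
  · exact ⟨ha, hb⟩
  · exfalso; rw [ha] at hab; rw [hb] at hab; exact lt_irrefl _ (hxy.trans hab)
  · exact absurd (ha ▸ hb ▸ hab) (lt_irrefl _)

/-- The heart of the computation: multiplying the product of `ω_i` over the complement of
`{α, β}` by the four vector sums. -/
lemma pair_value (c v q : Fin (n + 1) → ℝ) {α β : Fin (n + 1)} (hαβ : α < β) :
    ((tabB n).val (∏ i ∈ univ \ {α, β}, tabW n i) : AA)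
        * ((∑ a, v a • fVec n a) * ((∑ a, v a • eVec n a) *
            ((∑ a, q a • fVec n a) * (∑ a, q a • eVec n a))))
      = ((v α * q β - v β * q α) ^ 2) • ((tabB n).val (∏ i, tabW n i) : AA) := by
  classical
  set S : Finset (Fin (n + 1)) := univ \ {α, β} with hS
  set M : AA := ((tabB n).val (∏ i ∈ S, tabW n i) : AA) with hM
  set μA : AA := ((tabB n).val (∏ i, tabW n i) : AA) with hμA
  have hmem : ∀ x : Fin (n + 1), x ≠ α → x ≠ β → x ∈ S := by
    intro x h1 h2; simp [hS, h1, h2]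
  have hMf : ∀ x, x ≠ α → x ≠ β → M * fVec n x = 0 :=
    fun x h1 h2 => prodW_mul_f n (hmem x h1 h2)
  have hMe : ∀ x, x ≠ α → x ≠ β → M * eVec n x = 0 :=
    fun x h1 h2 => prodW_mul_e n (hmem x h1 h2)
  have hcf : ∀ x, M * fVec n x = fVec n x * M := fun x => tabB_comm_f n _ x
  have hce : ∀ x, M * eVec n x = eVec n x * M := fun x => tabB_comm_e n _ x
  -- the four nonzero values
  have hαS : α ∉ insert β S := by simp [hS, hαβ.ne]
  have hβS : β ∉ S := by simp [hS]
  have huniv : (univ : Finset (Fin (n + 1))) = insert α (insert β S) := by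
    ext x
    by_cases h1 : x = α <;> by_cases h2 : x = β <;> simp [hS, h1, h2]
  have hprod : ∀ x y : tabB n, (∏ i ∈ S, tabW n i) * (x * y) = ∏ i, tabW n i →
      M * ((tabB n).val x * (tabB n).val y) = μA := by
    intro x y hxy
    rw [hM, hμA, ← tabB_val_mul, ← tabB_val_mul, hxy]
  have hv11 : M * (fVec n α * (eVec n α * (fVec n β * eVec n β))) = μA := by
    rw [← mul_assoc (fVec n α) (eVec n α)]
    exact hprod (tabW n α) (tabW n β) (by
      rw [huniv, prod_insert hαS, prod_insert hβS]; ring)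
  have hv22 : M * (fVec n β * (eVec n β * (fVec n α * eVec n α))) = μA := by
    rw [← mul_assoc (fVec n β) (eVec n β)]
    exact hprod (tabW n β) (tabW n α) (by
      rw [huniv, prod_insert hαS, prod_insert hβS]; ring)
  have hv12 : M * (fVec n α * (eVec n β * (fVec n β * eVec n α))) = -μA := by
    rw [show fVec n α * (eVec n β * (fVec n β * eVec n α))
        = -(fVec n β * (eVec n β * (fVec n α * eVec n α))) from ea_cross _ _ _ _,
      mul_neg, hv22]
  have hv21 : M * (fVec n β * (eVec n α * (fVec n α * eVec n β))) = -μA := by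
    rw [show fVec n β * (eVec n α * (fVec n α * eVec n β))
        = -(fVec n α * (eVec n α * (fVec n β * eVec n β))) from ea_cross _ _ _ _,
      mul_neg, hv11]
  -- the kill lemmas
  have hkfα : ∀ b d, M * (fVec n α * (eVec n b * (fVec n α * eVec n d))) = 0 := by
    intro b d; rw [show fVec n α * (eVec n b * (fVec n α * eVec n d)) = 0 from
      ea_kill_f _ _ _, mul_zero]
  have hkfβ : ∀ b d, M * (fVec n β * (eVec n b * (fVec n β * eVec n d))) = 0 := by
    intro b d; rw [show fVec n β * (eVec n b * (fVec n β * eVec n d)) = 0 from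
      ea_kill_f _ _ _, mul_zero]
  have hkeα : ∀ a k, M * (fVec n a * (eVec n α * (fVec n k * eVec n α))) = 0 := by
    intro a k; rw [show fVec n a * (eVec n α * (fVec n k * eVec n α)) = 0 from
      ea_kill_e _ _ _, mul_zero]
  have hkeβ : ∀ a k, M * (fVec n a * (eVec n β * (fVec n k * eVec n β))) = 0 := by
    intro a k; rw [show fVec n a * (eVec n β * (fVec n k * eVec n β)) = 0 from
      ea_kill_e _ _ _, mul_zero]
  -- expand the product of the four sums and restrict to {α, β}
  have hnotmem : ∀ x : Fin (n + 1), x ∉ ({α, β} : Finset (Fin (n + 1))) → x ≠ α ∧ x ≠ β := by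
    intro x hx
    simp only [mem_insert, mem_singleton, not_or] at hx
    exact hx
  have hrestrict : (∑ d, ∑ k, ∑ b, ∑ a, (q d * q k * v b * v a) •
          (M * (fVec n a * (eVec n b * (fVec n k * eVec n d)))))
      = ∑ d ∈ ({α, β} : Finset (Fin (n+1))), ∑ k ∈ ({α, β} : Finset (Fin (n+1))),
          ∑ b ∈ ({α, β} : Finset (Fin (n+1))), ∑ a ∈ ({α, β} : Finset (Fin (n+1))),
          (q d * q k * v b * v a) •
          (M * (fVec n a * (eVec n b * (fVec n k * eVec n d)))) := by
    rw [← Finset.sum_subset (subset_univ _) (fun x _ hx =>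
      sum_eq_zero fun k _ => sum_eq_zero fun b _ => sum_eq_zero fun a _ => by
        rw [killer2 (hcf a) (killer2 (hce b) (killer2 (hcf k)
          (hMe x (hnotmem x hx).1 (hnotmem x hx).2))), smul_zero])]
    refine sum_congr rfl fun d _ => ?_
    rw [← Finset.sum_subset (subset_univ _) (fun x _ hx =>
      sum_eq_zero fun b _ => sum_eq_zero fun a _ => by
        rw [killer2 (hcf a) (killer2 (hce b)
          (killer1 (hMf x (hnotmem x hx).1 (hnotmem x hx).2) _)), smul_zero])]
    refine sum_congr rfl fun k _ => ?_
    rw [← Finset.sum_subset (subset_univ _) (fun x _ hx =>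
      sum_eq_zero fun a _ => by
        rw [killer2 (hcf a) (killer1 (hMe x (hnotmem x hx).1 (hnotmem x hx).2) _), smul_zero])]
    refine sum_congr rfl fun b _ => ?_
    rw [← Finset.sum_subset (subset_univ _) (fun x _ hx => by
        rw [killer1 (hMf x (hnotmem x hx).1 (hnotmem x hx).2) _, smul_zero])]
  simp only [Finset.mul_sum, Finset.sum_mul, smul_mul_assoc, mul_smul_comm, smul_smul,
    Finset.smul_sum]
  rw [hrestrict]
  simp only [Finset.sum_pair hαβ.ne]
  simp only [hv11, hv22, hv12, hv21, hkfα, hkfβ, hkeα, hkeβ, smul_zero, add_zero, zero_add,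
    smul_neg]
  module

end TabAux

open TabAux in
/-- second identity of Tabachnikov's lemma: with
`ω = Σ_α c_α f_α ∧ e_α` and `μ = (f_0 ∧ e_0) ∧ ⋯ ∧ (f_n ∧ e_n)`,
`ω^{n−1} ∧ (Σ v_α f_α) ∧ (Σ v_α e_α) ∧ (Σ q_α f_α) ∧ (Σ q_α e_α)
  = (n−1)! (Σ_{α<β} (v_α q_β − v_β q_α)² ∏_{γ≠α,β} c_γ) μ`. -/
theorem tabachnikov_second_identity (n : ℕ) (hn : 1 ≤ n)
    (c v q : Fin (n + 1) → ℝ) :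
    (∑ α, c α • (fVec n α * eVec n α)) ^ (n - 1)
        * (∑ α, v α • fVec n α) * (∑ α, v α • eVec n α)
        * (∑ α, q α • fVec n α) * (∑ α, q α • eVec n α)
      = (((n - 1).factorial : ℝ) *
            ∑ α, ∑ β ∈ univ.filter (fun β => α < β),
              (v α * q β - v β * q α) ^ 2 * ∏ γ ∈ univ \ {α, β}, c γ) •
          ((List.finRange (n + 1)).map (fun γ => fVec n γ * eVec n γ)).prod := by
  classical
  -- μ as a product in the commutative subalgebra
  have hμ : ((List.finRange (n + 1)).map (fun γ => fVec n γ * eVec n γ)).prod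
      = ((tabB n).val (∏ i, tabW n i) :
          ExteriorAlgebra ℝ ((Fin (n + 1) → ℝ) × (Fin (n + 1) → ℝ))) := by
    conv_rhs => rw [Fin.prod_univ_def]
    rw [map_list_prod, List.map_map]
    rfl
  have hω : (∑ α, c α • (fVec n α * eVec n α)) = (tabB n).val (∑ α, c α • tabW n α) := by
    rw [map_sum]
    exact sum_congr rfl fun i _ => by rw [map_smul]; rfl
  have hpow : (∑ α, c α • tabW n α) ^ (n - 1)
      = (n - 1).factorial • ∑ S ∈ (univ : Finset (Fin (n + 1))).powersetCard (n - 1),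
          (∏ i ∈ S, c i) • ∏ i ∈ S, tabW n i := by
    rw [sq_zero_sum_pow (fun i => c i • tabW n i) (fun i => by
        rw [smul_mul_smul_comm, tabW_sq, smul_zero]) (n - 1)]
    congr 1
    exact sum_congr rfl fun S _ => prod_smul_out S c (tabW n)
  -- the reindexed sum
  have hsum : ∑ S ∈ (univ : Finset (Fin (n + 1))).powersetCard (n - 1),
      (∏ i ∈ S, c i) • ((tabB n).val (∏ i ∈ S, tabW n i) *
        ((∑ a, v a • fVec n a) * ((∑ a, v a • eVec n a) *
          ((∑ a, q a • fVec n a) * (∑ a, q a • eVec n a)))))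
    = ∑ p ∈ (univ : Finset (Fin (n + 1))).sigma (fun α => univ.filter fun β => α < β),
        ((v p.1 * q p.2 - v p.2 * q p.1) ^ 2 * ∏ γ ∈ univ \ {p.1, p.2}, c γ) •
          (tabB n).val (∏ i, tabW n i) := by
    refine (Finset.sum_nbij (fun p => univ \ {p.1, p.2}) ?_ ?_ ?_ ?_).symm
    · rintro ⟨a, b⟩ hp
      simp only [mem_sigma, mem_filter, mem_univ, true_and] at hp
      rw [mem_powersetCard]
      refine ⟨sdiff_subset, ?_⟩
      rw [card_sdiff_of_subset (subset_univ _), card_pair hp.ne, card_univ, Fintype.card_fin]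
      omega
    · rintro ⟨a, b⟩ hp ⟨a', b'⟩ hp' h
      simp only [coe_sigma, Set.mem_sigma_iff, mem_coe, mem_sigma,
        mem_filter, mem_univ, true_and] at hp hp'
      have h2 : ({a, b} : Finset (Fin (n + 1))) = {a', b'} := by
        have h3 := congrArg (fun T => (univ : Finset (Fin (n + 1))) \ T) h
        simpa only [sdiff_sdiff_self_left, univ_inter] using h3
      obtain ⟨h3, h4⟩ := pair_eq_pair hp hp' h2
      subst h3; subst h4; rfl
    · intro S hS
      simp only [mem_coe] at hS
      obtain ⟨hsub, hcard⟩ := mem_powersetCard.1 hS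
      have hT : (univ \ S).card = 2 := by
        rw [card_sdiff_of_subset hsub, hcard, card_univ, Fintype.card_fin]
        omega
      obtain ⟨a, b, hab, hTab⟩ := card_eq_two.1 hT
      have hback : univ \ (univ \ S) = S := by rw [sdiff_sdiff_self_left, univ_inter]
      rcases hab.lt_or_gt with h | h
      · refine ⟨⟨a, b⟩, ?_, ?_⟩
        · simp only [mem_coe, mem_sigma, mem_filter, mem_univ, true_and]
          exact h
        · show univ \ {a, b} = S
          rw [← hTab, hback]
      · refine ⟨⟨b, a⟩, ?_, ?_⟩
        · simp only [mem_coe, mem_sigma, mem_filter, mem_univ, true_and]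
          exact h
        · show univ \ {b, a} = S
          rw [pair_comm, ← hTab, hback]
    · rintro ⟨a, b⟩ hp
      simp only [mem_sigma, mem_filter, mem_univ, true_and] at hp
      rw [pair_value n c v q hp, smul_smul, mul_comm]
  -- assembling everything
  rw [hμ, hω, ← map_pow, hpow, map_nsmul, map_sum]
  simp only [map_smul]
  simp only [mul_assoc]
  rw [smul_mul_assoc, Finset.sum_mul]
  simp only [smul_mul_assoc]
  rw [hsum, ← Finset.sum_smul, Finset.sum_sigma' univ (fun α => univ.filter fun β => α < β)
    (fun α β => (v α * q β - v β * q α) ^ 2 * ∏ γ ∈ univ \ {α, β}, c γ),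
    mul_smul, Nat.cast_smul_eq_nsmul]
end
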